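/- arXiv:2506.13462 — 5 statements merged into one kernel-verified Lean document; each statement's English description precedes it below -/
import Mathlib

section
/- For every ξ ∈ C_c^∞(ℝ^d) the principal-value limit Lξ(x) exists for every x ∈ ℝ^d, equals (1/2)∫_{ℝ^d}(ξ(x+y)+ξ(x−y)−2ξ(x)) j(|y|) dy, and there exists a constant C > 0 (depending on ξ, j, d) such that |Lξ(x)| ≤ C·min(1, j(|x|)) for all x ∈ ℝ^d ∖ {0}. -/
open MeasureTheory Filter Topology Set

noncomputable section

/-- The truncated integral `∫_{|y|>r} (w(x+y) - w(x)) j(|y|) dy` approximating the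
principal value defining `Lw(x)`. -/
noncomputable def truncL (d : ℕ) (j : ℝ → ℝ) (w : EuclideanSpace ℝ (Fin d) → ℝ)
    (x : EuclideanSpace ℝ (Fin d)) (r : ℝ) : ℝ :=
  ∫ y in {y : EuclideanSpace ℝ (Fin d) | r < ‖y‖}, (w (x + y) - w x) * j ‖y‖

/-- The principal value `Lw(x) = lim_{δ↓0} ∫_{|y|>δ} (w(x+y) - w(x)) j(|y|) dy`
exists and equals `ℓ`. -/
def HasPVLim (d : ℕ) (j : ℝ → ℝ) (w : EuclideanSpace ℝ (Fin d) → ℝ)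
    (x : EuclideanSpace ℝ (Fin d)) (ℓ : ℝ) : Prop :=
  Tendsto (truncL d j w x) (𝓝[>] (0:ℝ)) (𝓝 ℓ)

/-- `ξ ∈ C_c^∞(Ω)`. -/
def IsTestOn (d : ℕ) (Ω : Set (EuclideanSpace ℝ (Fin d)))
    (ξ : EuclideanSpace ℝ (Fin d) → ℝ) : Prop :=
  ContDiff ℝ (⊤ : ℕ∞) ξ ∧ HasCompactSupport ξ ∧ tsupport ξ ⊆ Ω

lemma aux_second_diff {F : Type*} [NormedAddCommGroup F] [NormedSpace ℝ F]
    {ξ : F → ℝ} (hξ : ContDiff ℝ (⊤ : ℕ∞) ξ) {L : NNReal} (hL : LipschitzWith L (fderiv ℝ ξ))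
    (x y : F) : |ξ (x + y) + ξ (x - y) - 2 * ξ x| ≤ 2 * L * ‖y‖ ^ 2 := by
  have hdiff : ∀ z : F, DifferentiableAt ℝ ξ z := fun z => (hξ.differentiable (by simp)) z
  have key : ∀ v : F, ‖v‖ ≤ ‖y‖ →
      ‖ξ (x + v) - ξ x - (fderiv ℝ ξ x) v‖ ≤ (L * ‖y‖) * ‖v‖ := by
    intro v hv
    have h := Convex.norm_image_sub_le_of_norm_fderiv_le' (f := ξ) (φ := fderiv ℝ ξ x)
      (s := Metric.closedBall x ‖y‖) (C := L * ‖y‖)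
      (fun z _ => hdiff z)
      (fun z hz => by
        have h1 : ‖fderiv ℝ ξ z - fderiv ℝ ξ x‖ ≤ L * ‖z - x‖ := by
          simpa [dist_eq_norm] using hL.dist_le_mul z x
        have h2 : ‖z - x‖ ≤ ‖y‖ := by
          simpa [dist_eq_norm] using (Metric.mem_closedBall.mp hz)
        calc ‖fderiv ℝ ξ z - fderiv ℝ ξ x‖ ≤ L * ‖z - x‖ := h1
          _ ≤ L * ‖y‖ := by
            exact mul_le_mul_of_nonneg_left h2 (by positivity))
      (convex_closedBall x ‖y‖)
      (Metric.mem_closedBall_self (norm_nonneg y))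
      (x := x) (y := x + v) (by simpa [dist_eq_norm] using hv)
    simpa using h
  have h1 := key y le_rfl
  have h2 := key (-y) (by simp)
  rw [map_neg] at h2
  have e2 : x + -y = x - y := by abel
  rw [e2] at h2
  have : ξ (x + y) + ξ (x - y) - 2 * ξ x =
      (ξ (x + y) - ξ x - (fderiv ℝ ξ x) y) + (ξ (x - y) - ξ x - -(fderiv ℝ ξ x) y) := by ring
  rw [this]
  have hn : ‖y‖ * ‖y‖ = ‖y‖ ^ 2 := (sq ‖y‖).symm
  calc |(ξ (x + y) - ξ x - (fderiv ℝ ξ x) y) + (ξ (x - y) - ξ x - -(fderiv ℝ ξ x) y)|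
      ≤ |ξ (x + y) - ξ x - (fderiv ℝ ξ x) y| + |ξ (x - y) - ξ x - -(fderiv ℝ ξ x) y| :=
        abs_add_le _ _
    _ ≤ (L * ‖y‖) * ‖y‖ + (L * ‖y‖) * ‖(-y : F)‖ := by
        refine add_le_add ?_ ?_
        · simpa [Real.norm_eq_abs] using h1
        · simpa [Real.norm_eq_abs, norm_neg] using h2
    _ ≤ 2 * L * ‖y‖ ^ 2 := by
        rw [norm_neg]
        nlinarith [norm_nonneg y, L.coe_nonneg]

set_option maxHeartbeats 2000000 in
/-- For `ξ ∈ C_c^∞(ℝ^d)` the principal value `Lξ(x)` exists for every `x`, equals the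
second-order difference integral, and is bounded by a constant times `min(1, j(|x|))`. -/
theorem pv_exists_representation_and_bound
    (d : ℕ) (hd : 2 ≤ d)
    (j : ℝ → ℝ) (hjpos : ∀ r > 0, 0 < j r) (hjanti : AntitoneOn j (Set.Ioi 0))
    (hjint : Integrable (fun y : EuclideanSpace ℝ (Fin d) => min 1 (‖y‖ ^ 2) * j ‖y‖))
    (κ : ℝ) (hκ : 1 ≤ κ) (hjdoub : ∀ r > 0, j r ≤ κ * j (2 * r)) :
    ∀ ξ : EuclideanSpace ℝ (Fin d) → ℝ, ContDiff ℝ (⊤ : ℕ∞) ξ → HasCompactSupport ξ →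
    ∃ Lξ : EuclideanSpace ℝ (Fin d) → ℝ,
      (∀ x, HasPVLim d j ξ x (Lξ x)) ∧
      (∀ x, Lξ x = (1/2) * ∫ y, (ξ (x + y) + ξ (x - y) - 2 * ξ x) * j ‖y‖) ∧
      ∃ C > (0:ℝ), ∀ x : EuclideanSpace ℝ (Fin d), x ≠ 0 → |Lξ x| ≤ C * min 1 (j ‖x‖) := by
  intro ξ hξ hξc
  classical
  haveI : Nonempty (Fin d) := ⟨⟨0, by omega⟩⟩
  set m : EuclideanSpace ℝ (Fin d) → ℝ := fun y => min 1 (‖y‖ ^ 2) * j ‖y‖ with hm_def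
  -- a.e. nonvanishing
  have hsing : (volume : Measure (EuclideanSpace ℝ (Fin d))) {0} = 0 := measure_singleton 0
  have hne0 : ∀ᵐ y : EuclideanSpace ℝ (Fin d), y ≠ 0 := by
    rw [ae_iff]
    convert hsing using 2
    ext y; simp
  have hj0 : ∀ᵐ y : EuclideanSpace ℝ (Fin d), 0 ≤ j ‖y‖ := by
    filter_upwards [hne0] with y hy
    exact (hjpos ‖y‖ (norm_pos_iff.mpr hy)).le
  have hm0 : ∀ᵐ y : EuclideanSpace ℝ (Fin d), 0 ≤ m y := by
    filter_upwards [hj0] with y hy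
    exact mul_nonneg (le_min zero_le_one (by positivity)) hy
  -- measurability of y ↦ j ‖y‖
  have hminpos : ∀ y : EuclideanSpace ℝ (Fin d), y ≠ 0 → 0 < min 1 (‖y‖ ^ 2) := by
    intro y hy
    exact lt_min one_pos (pow_pos (norm_pos_iff.mpr hy) 2)
  have hjm : AEMeasurable (fun y : EuclideanSpace ℝ (Fin d) => j ‖y‖) volume := by
    have h1 : AEMeasurable m volume := hjint.aemeasurable
    have h2 : Measurable (fun y : EuclideanSpace ℝ (Fin d) => min 1 (‖y‖ ^ 2)) :=
      (continuous_const.min (continuous_norm.pow 2)).measurable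
    refine (h1.div h2.aemeasurable).congr ?_
    filter_upwards [hne0] with y hy
    simp only [hm_def]
    exact mul_div_cancel_left₀ _ (hminpos y hy).ne'
  -- sup bound on ξ
  obtain ⟨M, hM⟩ := hξc.exists_bound_of_continuous hξ.continuous
  have hM' : ∀ z, |ξ z| ≤ M := fun z => by simpa [Real.norm_eq_abs] using hM z
  have hMnn : 0 ≤ M := (norm_nonneg _).trans (hM 0)
  -- Lipschitz bound on fderiv ξ
  have hξ1 : ContDiff ℝ (⊤ : ℕ∞) (fderiv ℝ ξ) := hξ.fderiv_right (by simp)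
  obtain ⟨L0, hL0⟩ : ∃ C, ∀ z, ‖fderiv ℝ (fderiv ℝ ξ) z‖ ≤ C := by
    have hc' : @Continuous _ _ _ (SeminormedAddGroup.toPseudoMetricSpace).toUniformSpace.toTopologicalSpace
        (fderiv ℝ (fderiv ℝ ξ)) := hξ1.continuous_fderiv (by simp)
    obtain ⟨C, hC⟩ := (((hξc.fderiv ℝ).fderiv ℝ).isCompact_range hc').isBounded.exists_norm_le
    exact ⟨C, fun z => hC _ ⟨z, rfl⟩⟩
  set L : NNReal := ⟨max L0 0, le_max_right _ _⟩ with hL_def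
  have hLip : LipschitzWith L (fderiv ℝ ξ) := by
    refine lipschitzWith_of_nnnorm_fderiv_le (hξ1.differentiable (by simp)) (fun z => ?_)
    rw [← NNReal.coe_le_coe]
    exact (hL0 z).trans (le_max_left _ _)
  have hsd : ∀ x y : EuclideanSpace ℝ (Fin d),
      |ξ (x + y) + ξ (x - y) - 2 * ξ x| ≤ 2 * L * ‖y‖ ^ 2 :=
    fun x y => aux_second_diff hξ hLip x y
  set C₂ : ℝ := 4 * M + 2 * L with hC2_def
  have hC2nn : 0 ≤ C₂ := by positivity
  have hsd' : ∀ x y : EuclideanSpace ℝ (Fin d),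
      |ξ (x + y) + ξ (x - y) - 2 * ξ x| ≤ C₂ * min 1 (‖y‖ ^ 2) := by
    intro x y
    rcases le_total (‖y‖ ^ 2) 1 with h | h
    · rw [min_eq_right h]
      calc |ξ (x + y) + ξ (x - y) - 2 * ξ x| ≤ 2 * L * ‖y‖ ^ 2 := hsd x y
        _ ≤ C₂ * ‖y‖ ^ 2 := by nlinarith [sq_nonneg ‖y‖]
    · rw [min_eq_left h]
      have t1 := abs_le.mp (hM' (x + y))
      have t2 := abs_le.mp (hM' (x - y))
      have t3 := abs_le.mp (hM' x)
      have h4 : |ξ (x + y) + ξ (x - y) - 2 * ξ x| ≤ 4 * M := by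
        rw [abs_le]; constructor <;> [linarith; linarith]
      calc |ξ (x + y) + ξ (x - y) - 2 * ξ x| ≤ 4 * M := h4
        _ ≤ C₂ * 1 := by rw [mul_one, hC2_def]; linarith [L.coe_nonneg]
  -- the symmetrized integrand and its integrability
  set g : EuclideanSpace ℝ (Fin d) → EuclideanSpace ℝ (Fin d) → ℝ :=
    fun x y => (ξ (x + y) + ξ (x - y) - 2 * ξ x) * j ‖y‖ with hg_def
  have hgmeas : ∀ x, AEStronglyMeasurable (g x) volume := by
    intro x
    apply AEMeasurable.aestronglyMeasurable
    refine AEMeasurable.mul ?_ hjm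
    exact (((hξ.continuous.comp (continuous_const.add continuous_id)).add
      (hξ.continuous.comp (continuous_const.sub continuous_id))).sub
      continuous_const).measurable.aemeasurable
  have hgbd : ∀ x, ∀ᵐ y : EuclideanSpace ℝ (Fin d), ‖g x y‖ ≤ C₂ * m y := by
    intro x
    filter_upwards [hj0] with y hy
    rw [hg_def, Real.norm_eq_abs, abs_mul, abs_of_nonneg hy]
    calc |ξ (x + y) + ξ (x - y) - 2 * ξ x| * j ‖y‖
        ≤ (C₂ * min 1 (‖y‖ ^ 2)) * j ‖y‖ :=
          mul_le_mul_of_nonneg_right (hsd' x y) hy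
      _ = C₂ * m y := by rw [hm_def]; ring
  have hgint : ∀ x, Integrable (g x) volume :=
    fun x => (hjint.const_mul C₂).mono' (hgmeas x) (hgbd x)
  -- integrability on the truncated region
  have hsmeas : ∀ r : ℝ, MeasurableSet {y : EuclideanSpace ℝ (Fin d) | r < ‖y‖} :=
    fun r => (isOpen_lt continuous_const continuous_norm).measurableSet
  have key : ∀ w : EuclideanSpace ℝ (Fin d) → ℝ, Continuous w → (∀ z, |w z| ≤ 2 * M) →
      ∀ r : ℝ, 0 < r → IntegrableOn (fun y => w y * j ‖y‖)
        {y : EuclideanSpace ℝ (Fin d) | r < ‖y‖} volume := by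
    intro w hw hwb r hr
    have hminr : 0 < min 1 (r ^ 2) := lt_min one_pos (pow_pos hr 2)
    refine Integrable.mono'
      ((hjint.restrict (s := {y : EuclideanSpace ℝ (Fin d) | r < ‖y‖})).const_mul
        (2 * M / min 1 (r ^ 2)))
      ((hw.measurable.aemeasurable.mul hjm).aestronglyMeasurable.restrict) ?_
    filter_upwards [ae_restrict_of_ae hj0, ae_restrict_mem (hsmeas r)] with y hjy hys
    have hyr : r < ‖y‖ := hys
    have h2 : j ‖y‖ * min 1 (r ^ 2) ≤ m y := by
      have hmono : min 1 (r ^ 2) ≤ min 1 (‖y‖ ^ 2) := min_le_min le_rfl (by nlinarith)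
      calc j ‖y‖ * min 1 (r ^ 2) ≤ j ‖y‖ * min 1 (‖y‖ ^ 2) :=
            mul_le_mul_of_nonneg_left hmono hjy
        _ = m y := by simp only [hm_def]; ring
    have h3 : j ‖y‖ ≤ m y / min 1 (r ^ 2) := (le_div_iff₀ hminr).mpr h2
    calc ‖w y * j ‖y‖‖ = |w y| * j ‖y‖ := by
          rw [Real.norm_eq_abs, abs_mul, abs_of_nonneg hjy]
      _ ≤ (2 * M) * (m y / min 1 (r ^ 2)) :=
          mul_le_mul (hwb y) h3 hjy (by positivity)
      _ = 2 * M / min 1 (r ^ 2) * m y := by ring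
  have hfint : ∀ (x : EuclideanSpace ℝ (Fin d)) (r : ℝ), 0 < r →
      IntegrableOn (fun y => (ξ (x + y) - ξ x) * j ‖y‖)
        {y : EuclideanSpace ℝ (Fin d) | r < ‖y‖} volume := by
    intro x r hr
    refine key (fun y => ξ (x + y) - ξ x)
      (by exact (hξ.continuous.comp (continuous_const.add continuous_id)).sub continuous_const)
      (fun z => ?_) r hr
    have h1 := abs_le.mp (hM' (x + z)); have h2 := abs_le.mp (hM' x)
    show |ξ (x + z) - ξ x| ≤ 2 * M
    rw [abs_le]; exact ⟨by linarith [h1.1, h2.2], by linarith [h1.2, h2.1]⟩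
  have hf2int : ∀ (x : EuclideanSpace ℝ (Fin d)) (r : ℝ), 0 < r →
      IntegrableOn (fun y => (ξ (x - y) - ξ x) * j ‖y‖)
        {y : EuclideanSpace ℝ (Fin d) | r < ‖y‖} volume := by
    intro x r hr
    refine key (fun y => ξ (x - y) - ξ x)
      (by exact (hξ.continuous.comp (continuous_const.sub continuous_id)).sub continuous_const)
      (fun z => ?_) r hr
    have h1 := abs_le.mp (hM' (x - z)); have h2 := abs_le.mp (hM' x)
    show |ξ (x - z) - ξ x| ≤ 2 * M
    rw [abs_le]; exact ⟨by linarith [h1.1, h2.2], by linarith [h1.2, h2.1]⟩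
  -- symmetrization
  have hsymm : ∀ (x : EuclideanSpace ℝ (Fin d)) (r : ℝ), 0 < r →
      truncL d j ξ x r = (1/2) * ∫ y in {y : EuclideanSpace ℝ (Fin d) | r < ‖y‖}, g x y := by
    intro x r hr
    have hneg : (∫ y in {y : EuclideanSpace ℝ (Fin d) | r < ‖y‖}, (ξ (x + y) - ξ x) * j ‖y‖)
        = ∫ y in {y : EuclideanSpace ℝ (Fin d) | r < ‖y‖}, (ξ (x - y) - ξ x) * j ‖y‖ := by
      calc (∫ y in {y : EuclideanSpace ℝ (Fin d) | r < ‖y‖}, (ξ (x + y) - ξ x) * j ‖y‖)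
          = ∫ y, ({y : EuclideanSpace ℝ (Fin d) | r < ‖y‖}.indicator
              (fun y => (ξ (x + y) - ξ x) * j ‖y‖)) y := (integral_indicator (hsmeas r)).symm
        _ = ∫ y, ({y : EuclideanSpace ℝ (Fin d) | r < ‖y‖}.indicator
              (fun y => (ξ (x + y) - ξ x) * j ‖y‖)) (-y) := (integral_neg_eq_self _ _).symm
        _ = ∫ y, ({y : EuclideanSpace ℝ (Fin d) | r < ‖y‖}.indicator
              (fun y => (ξ (x - y) - ξ x) * j ‖y‖)) y := by
            congr 1; funext y
            by_cases hy : y ∈ {y : EuclideanSpace ℝ (Fin d) | r < ‖y‖}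
            · rw [indicator_of_mem (by simpa using hy), indicator_of_mem hy]
              simp [sub_eq_add_neg]
            · rw [indicator_of_notMem (by simpa using hy), indicator_of_notMem hy]
        _ = _ := integral_indicator (hsmeas r)
    have hgfe : (∫ y in {y : EuclideanSpace ℝ (Fin d) | r < ‖y‖}, g x y)
        = (∫ y in {y : EuclideanSpace ℝ (Fin d) | r < ‖y‖}, (ξ (x + y) - ξ x) * j ‖y‖)
        + ∫ y in {y : EuclideanSpace ℝ (Fin d) | r < ‖y‖}, (ξ (x - y) - ξ x) * j ‖y‖ := by
      rw [← integral_add (hfint x r hr) (hf2int x r hr)]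
      apply setIntegral_congr_fun (hsmeas r)
      intro y _
      rw [hg_def]; ring
    simp only [truncL]
    rw [hgfe, ← hneg]
    ring
  -- small-ball integrals tend to zero along 1/(n+1)
  have htails : ∀ x : EuclideanSpace ℝ (Fin d),
      Tendsto (fun n : ℕ => ∫ y in
        Metric.closedBall (0:EuclideanSpace ℝ (Fin d)) (((n:ℝ)+1)⁻¹), |g x y|) atTop (𝓝 0) := by
    intro x
    have hiInter : (⋂ n : ℕ, Metric.closedBall (0:EuclideanSpace ℝ (Fin d)) (((n:ℝ)+1)⁻¹))
        = {0} := by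
      ext y
      simp only [mem_iInter, Metric.mem_closedBall, dist_zero_right, mem_singleton_iff]
      constructor
      · intro h
        by_contra hy
        have hy' : 0 < ‖y‖ := norm_pos_iff.mpr hy
        obtain ⟨n, hn⟩ := exists_nat_gt (‖y‖)⁻¹
        have h1 : (‖y‖)⁻¹ < (n:ℝ) + 1 := by linarith
        have h2 : ((n:ℝ)+1)⁻¹ < ‖y‖ := (inv_lt_comm₀ (by positivity) hy').mpr h1
        exact absurd (h n) (not_le.mpr h2)
      · intro h
        subst h
        intro n
        have : (0:ℝ) ≤ ((n:ℝ)+1)⁻¹ := by positivity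
        simpa using this
    have h0 : (∫ y in (⋂ n : ℕ, Metric.closedBall (0:EuclideanSpace ℝ (Fin d)) (((n:ℝ)+1)⁻¹)),
        |g x y|) = 0 := by
      rw [hiInter, Measure.restrict_eq_zero.mpr hsing, integral_zero_measure]
    have h := tendsto_setIntegral_of_antitone (μ := volume) (f := fun y => |g x y|)
      (s := fun n : ℕ => Metric.closedBall (0:EuclideanSpace ℝ (Fin d)) (((n:ℝ)+1)⁻¹))
      (fun n => measurableSet_closedBall)
      (fun a b hab => Metric.closedBall_subset_closedBall (by
        have : (a:ℝ) ≤ (b:ℝ) := Nat.cast_le.mpr hab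
        gcongr))
      ⟨0, ((hgint x).abs).integrableOn⟩
    rwa [h0] at h
  -- convergence of truncated integrals
  have hconv : ∀ x : EuclideanSpace ℝ (Fin d),
      Tendsto (fun r => ∫ y in {y : EuclideanSpace ℝ (Fin d) | r < ‖y‖}, g x y)
        (𝓝[>] (0:ℝ)) (𝓝 (∫ y, g x y)) := by
    intro x
    rw [Metric.tendsto_nhdsWithin_nhds]
    intro ε hε
    obtain ⟨N, hN⟩ := ((htails x).eventually_lt_const hε).exists
    refine ⟨((N:ℝ)+1)⁻¹, by positivity, ?_⟩
    intro r hr hrd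
    have hr' : 0 < r := hr
    have hrδ : r ≤ ((N:ℝ)+1)⁻¹ := by
      rw [Real.dist_eq, sub_zero, abs_of_pos hr'] at hrd
      exact hrd.le
    have hcompl : {y : EuclideanSpace ℝ (Fin d) | r < ‖y‖}
        = (Metric.closedBall (0:EuclideanSpace ℝ (Fin d)) r)ᶜ := by
      ext y
      simp [Metric.mem_closedBall, dist_zero_right, not_le]
    have hsplit : (∫ y in Metric.closedBall (0:EuclideanSpace ℝ (Fin d)) r, g x y)
        + (∫ y in {y : EuclideanSpace ℝ (Fin d) | r < ‖y‖}, g x y) = ∫ y, g x y := by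
      rw [hcompl]
      exact integral_add_compl measurableSet_closedBall (hgint x)
    rw [Real.dist_eq]
    have h1 : (∫ y in {y : EuclideanSpace ℝ (Fin d) | r < ‖y‖}, g x y) - ∫ y, g x y
        = -(∫ y in Metric.closedBall (0:EuclideanSpace ℝ (Fin d)) r, g x y) := by
      linarith [hsplit]
    rw [h1, abs_neg]
    have h2 : |∫ y in Metric.closedBall (0:EuclideanSpace ℝ (Fin d)) r, g x y|
        ≤ ∫ y in Metric.closedBall (0:EuclideanSpace ℝ (Fin d)) r, |g x y| := by
      simpa [Real.norm_eq_abs] using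
        norm_integral_le_integral_norm (μ := volume.restrict
          (Metric.closedBall (0:EuclideanSpace ℝ (Fin d)) r)) (g x)
    have h3 : (∫ y in Metric.closedBall (0:EuclideanSpace ℝ (Fin d)) r, |g x y|)
        ≤ ∫ y in Metric.closedBall (0:EuclideanSpace ℝ (Fin d)) (((N:ℝ)+1)⁻¹), |g x y| := by
      refine setIntegral_mono_set ((hgint x).abs.integrableOn)
        (Filter.Eventually.of_forall (fun y => abs_nonneg _)) ?_
      exact HasSubset.Subset.eventuallyLE (Metric.closedBall_subset_closedBall hrδ)
    exact lt_of_le_of_lt (h2.trans h3) hN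
  -- assemble
  refine ⟨fun x => (1/2 : ℝ) * ∫ y, g x y, ?_, fun x => rfl, ?_⟩
  · intro x
    show Tendsto (truncL d j ξ x) (𝓝[>] (0:ℝ)) (𝓝 ((1/2 : ℝ) * ∫ y, g x y))
    refine Tendsto.congr' ?_ ((hconv x).const_mul (1/2 : ℝ))
    filter_upwards [self_mem_nhdsWithin] with r hr
    exact (hsymm x r hr).symm
  · -- the bound
    set I := ∫ y, m y with hI_def
    have hInn : 0 ≤ I := integral_nonneg_of_ae hm0
    have hint_ξ : Integrable ξ volume := hξ.continuous.integrable_of_hasCompactSupport hξc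
    set N1 := ∫ y, |ξ y| with hN1_def
    have hN1nn : 0 ≤ N1 := integral_nonneg (fun y => abs_nonneg _)
    have habs : ∀ x : EuclideanSpace ℝ (Fin d),
        |(1/2 : ℝ) * ∫ y, g x y| ≤ (1/2) * ∫ y, |g x y| := by
      intro x
      rw [abs_mul, show |(1/2 : ℝ)| = 1/2 by norm_num]
      refine mul_le_mul_of_nonneg_left ?_ (by norm_num)
      simpa [Real.norm_eq_abs] using norm_integral_le_integral_norm (μ := volume) (g x)
    have hglob : ∀ x : EuclideanSpace ℝ (Fin d),
        |(1/2 : ℝ) * ∫ y, g x y| ≤ (1/2) * (C₂ * I) := by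
      intro x
      refine (habs x).trans ?_
      refine mul_le_mul_of_nonneg_left ?_ (by norm_num)
      calc (∫ y, |g x y|) ≤ ∫ y, C₂ * m y := by
            refine integral_mono_ae (hgint x).abs (hjint.const_mul C₂) ?_
            filter_upwards [hgbd x] with y hy
            simpa [Real.norm_eq_abs] using hy
        _ = C₂ * I := by rw [integral_const_mul]
    -- support radius
    obtain ⟨R0, hR0⟩ := hξc.isBounded.subset_closedBall (0 : EuclideanSpace ℝ (Fin d))
    set R := max R0 1 with hR_def
    have hRpos : (0:ℝ) < R := lt_of_lt_of_le one_pos (le_max_right _ _)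
    have hsupp : tsupport ξ ⊆ Metric.closedBall 0 R :=
      hR0.trans (Metric.closedBall_subset_closedBall (le_max_left _ _))
    have hxi0 : ∀ z : EuclideanSpace ℝ (Fin d), R < ‖z‖ → ξ z = 0 := by
      intro z hz
      apply image_eq_zero_of_notMem_tsupport
      intro hmem
      have := hsupp hmem
      rw [Metric.mem_closedBall, dist_zero_right] at this
      linarith
    have hdecay : ∀ x : EuclideanSpace ℝ (Fin d), 2 * R ≤ ‖x‖ →
        |(1/2:ℝ) * ∫ y, g x y| ≤ (κ * N1) * j ‖x‖ := by
      intro x hx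
      have hx0 : (0:ℝ) < ‖x‖ := by linarith
      have hjx : 0 < j ‖x‖ := hjpos _ hx0
      have hξx : ξ x = 0 := hxi0 x (by linarith)
      have hpt : ∀ y : EuclideanSpace ℝ (Fin d),
          |g x y| ≤ (|ξ (x + y)| + |ξ (x - y)|) * (κ * j ‖x‖) := by
        intro y
        by_cases hzz : ξ (x + y) = 0 ∧ ξ (x - y) = 0
        · have hgz : g x y = 0 := by
            rw [hg_def]; simp [hzz.1, hzz.2, hξx]
          rw [hgz, abs_zero]
          have : 0 ≤ κ * j ‖x‖ := by positivity
          positivity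
        · have hy2 : ‖x‖ / 2 ≤ ‖y‖ := by
            rcases not_and_or.mp hzz with h | h
            · have hb : ‖x + y‖ ≤ R := by
                by_contra hc
                push_neg at hc
                exact h (hxi0 _ hc)
              have htri : ‖x‖ ≤ ‖x + y‖ + ‖y‖ := by
                calc ‖x‖ = ‖(x + y) - y‖ := by rw [add_sub_cancel_right]
                  _ ≤ ‖x + y‖ + ‖y‖ := norm_sub_le _ _
              linarith
            · have hb : ‖x - y‖ ≤ R := by
                by_contra hc
                push_neg at hc
                exact h (hxi0 _ hc)
              have htri : ‖x‖ ≤ ‖x - y‖ + ‖y‖ := by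
                calc ‖x‖ = ‖(x - y) + y‖ := by rw [sub_add_cancel]
                  _ ≤ ‖x - y‖ + ‖y‖ := norm_add_le _ _
              linarith
          have hy0 : (0:ℝ) < ‖y‖ := by linarith
          have hjy : 0 ≤ j ‖y‖ := (hjpos _ hy0).le
          have hj1 : j ‖y‖ ≤ j (‖x‖ / 2) :=
            hjanti (mem_Ioi.mpr (by linarith)) (mem_Ioi.mpr hy0) hy2
          have hj2 : j (‖x‖ / 2) ≤ κ * j ‖x‖ := by
            have h := hjdoub (‖x‖ / 2) (by linarith)
            rwa [show 2 * (‖x‖ / 2) = ‖x‖ by ring] at h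
          have habs2 : |ξ (x + y) + ξ (x - y) - 2 * ξ x| ≤ |ξ (x + y)| + |ξ (x - y)| := by
            rw [hξx, mul_zero, sub_zero]
            exact abs_add_le _ _
          calc |g x y| = |ξ (x + y) + ξ (x - y) - 2 * ξ x| * j ‖y‖ := by
                rw [hg_def, abs_mul, abs_of_nonneg hjy]
            _ ≤ (|ξ (x + y)| + |ξ (x - y)|) * (κ * j ‖x‖) :=
                mul_le_mul habs2 (hj1.trans hj2) hjy (by positivity)
      have hint1 : Integrable (fun y : EuclideanSpace ℝ (Fin d) => |ξ (x + y)|) volume :=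
        (hint_ξ.comp_add_left x).abs
      have hint2 : Integrable (fun y : EuclideanSpace ℝ (Fin d) => |ξ (x - y)|) volume :=
        (hint_ξ.comp_sub_left x).abs
      have hintmaj : Integrable
          (fun y : EuclideanSpace ℝ (Fin d) => (|ξ (x + y)| + |ξ (x - y)|) * (κ * j ‖x‖))
          volume := (hint1.add hint2).mul_const _
      have h5 : (∫ y, |g x y|) ≤ ∫ y, (|ξ (x + y)| + |ξ (x - y)|) * (κ * j ‖x‖) :=
        integral_mono (hgint x).abs hintmaj hpt
      have h6 : (∫ y, (|ξ (x + y)| + |ξ (x - y)|) * (κ * j ‖x‖))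
          = (N1 + N1) * (κ * j ‖x‖) := by
        rw [integral_mul_const]
        congr 1
        rw [integral_add hint1 hint2, hN1_def]
        congr 1
        · exact integral_add_left_eq_self (fun y => |ξ y|) x
        · exact integral_sub_left_eq_self (fun y => |ξ y|) volume x
      calc |(1/2:ℝ) * ∫ y, g x y| ≤ (1/2) * ∫ y, |g x y| := habs x
        _ ≤ (1/2) * ((N1 + N1) * (κ * j ‖x‖)) := by
            rw [← h6]; exact mul_le_mul_of_nonneg_left h5 (by norm_num)
        _ = (κ * N1) * j ‖x‖ := by ring
    -- final constant
    set C1 := (1/2) * (C₂ * I) with hC1_def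
    have hC1nn : 0 ≤ C1 := by positivity
    have hκN1 : 0 ≤ κ * N1 := mul_nonneg (by linarith) hN1nn
    set B := C1 + κ * N1 + 1 with hB_def
    have hBpos : (0:ℝ) < B := by
      rw [hB_def]; linarith
    have hmlow : 0 < min 1 (j (2 * R)) := lt_min one_pos (hjpos _ (by linarith))
    refine ⟨B / min 1 (j (2 * R)) + B, add_pos_of_nonneg_of_pos (div_nonneg hBpos.le hmlow.le) hBpos, ?_⟩
    intro x hx
    show |(1/2:ℝ) * ∫ y, g x y| ≤ (B / min 1 (j (2 * R)) + B) * min 1 (j ‖x‖)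
    have hxn : 0 < ‖x‖ := norm_pos_iff.mpr hx
    have hjxpos : 0 < j ‖x‖ := hjpos _ hxn
    have hminx : 0 < min 1 (j ‖x‖) := lt_min one_pos hjxpos
    have hdivnn : 0 ≤ B / min 1 (j (2 * R)) := div_nonneg hBpos.le hmlow.le
    rcases le_or_gt (2 * R) ‖x‖ with hcase | hcase
    · rcases le_total 1 (j ‖x‖) with hmm | hmm
      · rw [min_eq_left hmm]
        calc |(1/2:ℝ) * ∫ y, g x y| ≤ C1 := hglob x
          _ ≤ B := by rw [hB_def]; linarith
          _ ≤ (B / min 1 (j (2 * R)) + B) * 1 := by rw [mul_one]; linarith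
      · rw [min_eq_right hmm]
        calc |(1/2:ℝ) * ∫ y, g x y| ≤ (κ * N1) * j ‖x‖ := hdecay x hcase
          _ ≤ (B / min 1 (j (2 * R)) + B) * j ‖x‖ := by
              refine mul_le_mul_of_nonneg_right ?_ hjxpos.le
              rw [hB_def]; linarith
    · have hjlow : j (2 * R) ≤ j ‖x‖ :=
        hjanti (mem_Ioi.mpr hxn) (mem_Ioi.mpr (by linarith)) hcase.le
      have hminlow : min 1 (j (2 * R)) ≤ min 1 (j ‖x‖) := min_le_min le_rfl hjlow
      calc |(1/2:ℝ) * ∫ y, g x y| ≤ C1 := hglob x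
        _ ≤ B := by rw [hB_def]; linarith
        _ = (B / min 1 (j (2 * R))) * min 1 (j (2 * R)) := by
            field_simp
        _ ≤ (B / min 1 (j (2 * R))) * min 1 (j ‖x‖) :=
            mul_le_mul_of_nonneg_left hminlow hdivnn
        _ ≤ (B / min 1 (j (2 * R)) + B) * min 1 (j ‖x‖) := by
            refine mul_le_mul_of_nonneg_right ?_ hminx.le
            linarith
end
end

section
/- The function W is a strictly decreasing C¹ bijection from (0,∞) onto (0,∞), with W'(t) = −F(t)^{-1/2} for all t > 0, lim_{t→0+} W(t) = ∞ and lim_{t→∞} W(t) = 0. -/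
open MeasureTheory Set Filter Topology

noncomputable section

/-- `F(t) = ∫₀ᵗ f(s) ds`. -/
noncomputable def Fint (f : ℝ → ℝ) (t : ℝ) : ℝ := ∫ s in (0:ℝ)..t, f s

/-- `W(t) = ∫ₜ^∞ F(s)^{-1/2} ds`. -/
noncomputable def Wfun (f : ℝ → ℝ) (t : ℝ) : ℝ := ∫ s in Set.Ioi t, (Fint f s) ^ (-(1:ℝ)/2)

/-- `Φ(t) = φ(t^{-2})^{-1/2}`. -/
noncomputable def PhiFun (φ : ℝ → ℝ) (t : ℝ) : ℝ := (φ (t ^ (-(2:ℝ)))) ^ (-(1:ℝ)/2)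

/-- The Keller–Osserman kernel `t ↦ (φ^{-1}(W(t)^{-2}))^{-1/2}`. -/
noncomputable def KOker (φinv f : ℝ → ℝ) (t : ℝ) : ℝ :=
  (φinv ((Wfun f t) ^ (-(2:ℝ)))) ^ (-(1:ℝ)/2)

lemma Fint_hasDerivAt {f : ℝ → ℝ} (hfC1 : ContDiff ℝ 1 f) (t : ℝ) :
    HasDerivAt (Fint f) (f t) t := by
  have hc : Continuous f := hfC1.continuous
  exact intervalIntegral.integral_hasDerivAt_right (hc.intervalIntegrable 0 t)
    (hc.stronglyMeasurableAtFilter _ _) hc.continuousAt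

lemma Fint_pos {f : ℝ → ℝ} (hfC1 : ContDiff ℝ 1 f) (hfpos : ∀ t > 0, 0 < f t) {t : ℝ}
    (ht : 0 < t) : 0 < Fint f t :=
  intervalIntegral.intervalIntegral_pos_of_pos_on
    (hfC1.continuous.intervalIntegrable 0 t) (fun x hx => hfpos x hx.1) ht

/-- the integrand -/
noncomputable def gker (f : ℝ → ℝ) (s : ℝ) : ℝ := (Fint f s) ^ (-(1:ℝ)/2)

lemma gker_pos {f : ℝ → ℝ} (hfC1 : ContDiff ℝ 1 f) (hfpos : ∀ t > 0, 0 < f t) {s : ℝ}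
    (hs : 0 < s) : 0 < gker f s :=
  Real.rpow_pos_of_pos (Fint_pos hfC1 hfpos hs) _

lemma gker_contOn {f : ℝ → ℝ} (hfC1 : ContDiff ℝ 1 f) (hfpos : ∀ t > 0, 0 < f t) :
    ContinuousOn (gker f) (Set.Ioi 0) := by
  intro s hs
  apply ContinuousAt.continuousWithinAt
  exact ((Fint_hasDerivAt hfC1 s).continuousAt).rpow_const
    (Or.inl (ne_of_gt (Fint_pos hfC1 hfpos hs)))

lemma gker_contAt {f : ℝ → ℝ} (hfC1 : ContDiff ℝ 1 f) (hfpos : ∀ t > 0, 0 < f t) {s : ℝ}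
    (hs : 0 < s) : ContinuousAt (gker f) s :=
  ((Fint_hasDerivAt hfC1 s).continuousAt).rpow_const
    (Or.inl (ne_of_gt (Fint_pos hfC1 hfpos hs)))

lemma gker_intervalIntegrable {f : ℝ → ℝ}
    (hWfin : ∀ t > 0, IntegrableOn (gker f) (Set.Ioi t)) {a b : ℝ} (ha : 0 < a) (hb : 0 < b) :
    IntervalIntegrable (gker f) volume a b := by
  have h2 : 0 < min a b / 2 := by positivity
  apply IntegrableOn.intervalIntegrable
  apply (hWfin _ h2).mono_set
  intro x hx
  have h1 : min a b ≤ x := hx.1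
  have hmin : 0 < min a b := lt_min ha hb
  exact Set.mem_Ioi.2 (lt_of_lt_of_le (by linarith) h1)

/-- splitting formula for `b ≥ a` -/
lemma Wfun_split {f : ℝ → ℝ}
    (hWfin : ∀ t > 0, IntegrableOn (gker f) (Set.Ioi t)) {a b : ℝ} (ha : 0 < a) (hab : a ≤ b) :
    Wfun f a = (∫ s in a..b, gker f s) + Wfun f b := by
  have hb : 0 < b := lt_of_lt_of_le ha hab
  have h1 : IntegrableOn (gker f) (Set.Ioc a b) :=
    (hWfin a ha).mono_set Set.Ioc_subset_Ioi_self
  have h2 : IntegrableOn (gker f) (Set.Ioi b) := hWfin b hb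
  have hU : Set.Ioc a b ∪ Set.Ioi b = Set.Ioi a := Set.Ioc_union_Ioi_eq_Ioi hab
  have := MeasureTheory.setIntegral_union (Set.Ioc_disjoint_Ioi le_rfl) measurableSet_Ioi h1 h2
  rw [hU] at this
  rw [intervalIntegral.integral_of_le hab]
  exact this

lemma Wfun_eq {f : ℝ → ℝ}
    (hWfin : ∀ t > 0, IntegrableOn (gker f) (Set.Ioi t)) {c x : ℝ} (hc : 0 < c) (hx : 0 < x) :
    Wfun f x = Wfun f c - ∫ s in c..x, gker f s := by
  rcases le_total c x with h | h
  · rw [Wfun_split hWfin hc h]; ring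
  · rw [Wfun_split hWfin hx h, intervalIntegral.integral_symm]; ring

lemma Wfun_hasDerivAt {f : ℝ → ℝ} (hfC1 : ContDiff ℝ 1 f) (hfpos : ∀ t > 0, 0 < f t)
    (hWfin : ∀ t > 0, IntegrableOn (gker f) (Set.Ioi t)) {t : ℝ} (ht : 0 < t) :
    HasDerivAt (Wfun f) (-(gker f t)) t := by
  have hc : 0 < t/2 := by positivity
  have hI : IntervalIntegrable (gker f) volume (t/2) t := gker_intervalIntegrable hWfin hc ht
  have hd : HasDerivAt (fun x => ∫ s in (t/2)..x, gker f s) (gker f t) t :=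
    intervalIntegral.integral_hasDerivAt_right hI
      ((gker_contOn hfC1 hfpos).stronglyMeasurableAtFilter isOpen_Ioi t ht)
      (gker_contAt hfC1 hfpos ht)
  have hd2 : HasDerivAt (fun x => Wfun f (t/2) - ∫ s in (t/2)..x, gker f s) (-(gker f t)) t :=
    hd.const_sub _
  apply hd2.congr_of_eventuallyEq
  filter_upwards [isOpen_Ioi.mem_nhds ht] with x hx
  exact Wfun_eq hWfin hc hx

lemma Wfun_strictAntiOn {f : ℝ → ℝ} (hfC1 : ContDiff ℝ 1 f) (hfpos : ∀ t > 0, 0 < f t)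
    (hWfin : ∀ t > 0, IntegrableOn (gker f) (Set.Ioi t)) :
    StrictAntiOn (Wfun f) (Set.Ioi 0) := by
  intro a ha b hb hab
  have h := Wfun_split hWfin ha hab.le
  have hpos : 0 < ∫ s in a..b, gker f s :=
    intervalIntegral.intervalIntegral_pos_of_pos_on (gker_intervalIntegrable hWfin ha hb)
      (fun x hx => gker_pos hfC1 hfpos (lt_trans ha hx.1)) hab
  linarith

lemma Wfun_pos {f : ℝ → ℝ} (hfC1 : ContDiff ℝ 1 f) (hfpos : ∀ t > 0, 0 < f t)
    (hWfin : ∀ t > 0, IntegrableOn (gker f) (Set.Ioi t)) {t : ℝ} (ht : 0 < t) :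
    0 < Wfun f t := by
  have h := Wfun_split hWfin ht (by linarith : t ≤ t + 1)
  have hpos : 0 < ∫ s in t..(t+1), gker f s :=
    intervalIntegral.intervalIntegral_pos_of_pos_on
      (gker_intervalIntegrable hWfin ht (by linarith))
      (fun x hx => gker_pos hfC1 hfpos (lt_trans ht hx.1)) (by linarith)
  have hnn : 0 ≤ Wfun f (t+1) := by
    apply MeasureTheory.setIntegral_nonneg measurableSet_Ioi
    intro s hs
    exact le_of_lt (gker_pos hfC1 hfpos (lt_trans (by linarith) hs))
  have h2 : Wfun f t = (∫ s in t..(t+1), gker f s) + Wfun f (t+1) := h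
  linarith

lemma Wfun_tendsto_atTop_zero {f : ℝ → ℝ}
    (hWfin : ∀ t > 0, IntegrableOn (gker f) (Set.Ioi t)) :
    Tendsto (Wfun f) atTop (𝓝 0) := by
  have h1 : Tendsto (fun t => ∫ s in (1:ℝ)..t, gker f s) atTop (𝓝 (Wfun f 1)) :=
    MeasureTheory.intervalIntegral_tendsto_integral_Ioi 1 (hWfin 1 one_pos) tendsto_id
  have h2 : Tendsto (fun t => Wfun f 1 - ∫ s in (1:ℝ)..t, gker f s) atTop (𝓝 0) := by
    have := (tendsto_const_nhds (x := Wfun f 1) (f := atTop)).sub h1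
    simpa using this
  apply h2.congr'
  filter_upwards [eventually_gt_atTop (0:ℝ)] with x hx
  exact (Wfun_eq hWfin one_pos hx).symm

lemma ratio_monotoneOn {m M : ℝ} (hm : 0 < m) {f : ℝ → ℝ} (hfC1 : ContDiff ℝ 1 f)
    (hfnn : ∀ t, 0 ≤ f t)
    (hfscal : ∀ t > 0, (1 + m) * f t ≤ t * deriv f t ∧ t * deriv f t ≤ (1 + M) * f t) :
    MonotoneOn (fun t => f t / t) (Set.Ioi 0) := by
  have hdiff : Differentiable ℝ f := hfC1.differentiable one_ne_zero
  apply monotoneOn_of_deriv_nonneg (convex_Ioi 0)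
  · intro x hx
    exact ((hdiff x).continuousAt.continuousWithinAt).div continuousWithinAt_id (ne_of_gt hx)
  · rw [interior_Ioi]
    intro x hx
    exact ((hdiff x).hasDerivAt.div (hasDerivAt_id x) (ne_of_gt hx)).differentiableAt.differentiableWithinAt
  · rw [interior_Ioi]
    intro x hx
    have hD : HasDerivAt (fun t => f t / t)
        ((deriv f x * x - f x * 1) / x ^ 2) x :=
      (hdiff x).hasDerivAt.div (hasDerivAt_id x) (ne_of_gt hx)
    rw [hD.deriv]
    have h1 := (hfscal x hx).1
    have h2 := hfnn x
    have h3 : 0 < x := hx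
    have : f x ≤ x * deriv f x := by nlinarith
    apply div_nonneg _ (sq_nonneg x)
    nlinarith

lemma f_le_linear {m M : ℝ} (hm : 0 < m) {f : ℝ → ℝ} (hfC1 : ContDiff ℝ 1 f)
    (hfnn : ∀ t, 0 ≤ f t)
    (hfscal : ∀ t > 0, (1 + m) * f t ≤ t * deriv f t ∧ t * deriv f t ≤ (1 + M) * f t)
    {t : ℝ} (ht : 0 < t) (ht1 : t ≤ 1) : f t ≤ f 1 * t := by
  have := ratio_monotoneOn hm hfC1 hfnn hfscal ht (Set.mem_Ioi.2 one_pos) ht1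
  simp only [div_one] at this
  calc f t = (f t / t) * t := by field_simp
    _ ≤ f 1 * t := by apply mul_le_mul_of_nonneg_right this (le_of_lt ht)

lemma Fint_le_quad {m M : ℝ} (hm : 0 < m) {f : ℝ → ℝ} (hf0 : f 0 = 0) (hfC1 : ContDiff ℝ 1 f)
    (hfnn : ∀ t, 0 ≤ f t)
    (hfscal : ∀ t > 0, (1 + m) * f t ≤ t * deriv f t ∧ t * deriv f t ≤ (1 + M) * f t)
    {t : ℝ} (ht : 0 < t) (ht1 : t ≤ 1) : Fint f t ≤ (f 1 / 2) * t ^ 2 := by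
  have hb : ∀ x ∈ Set.Icc (0:ℝ) t, f x ≤ f 1 * x := by
    intro x hx
    rcases eq_or_lt_of_le hx.1 with h | h
    · simp [← h, hf0]
    · exact f_le_linear hm hfC1 hfnn hfscal h (le_trans hx.2 ht1)
  have hInt : Fint f t ≤ ∫ s in (0:ℝ)..t, f 1 * s := by
    apply intervalIntegral.integral_mono_on ht.le
      (hfC1.continuous.intervalIntegrable 0 t)
      ((continuous_const.mul continuous_id).intervalIntegrable 0 t) hb
  calc Fint f t ≤ ∫ s in (0:ℝ)..t, f 1 * s := hInt
    _ = (f 1 / 2) * t ^ 2 := by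
        rw [intervalIntegral.integral_const_mul, _root_.integral_id (a := (0:ℝ)) (b := t)]
        ring

lemma gker_lower {m M : ℝ} (hm : 0 < m) {f : ℝ → ℝ} (hf0 : f 0 = 0) (hfC1 : ContDiff ℝ 1 f)
    (hfnn : ∀ t, 0 ≤ f t) (hfpos : ∀ t > 0, 0 < f t)
    (hfscal : ∀ t > 0, (1 + m) * f t ≤ t * deriv f t ∧ t * deriv f t ≤ (1 + M) * f t)
    {t : ℝ} (ht : 0 < t) (ht1 : t ≤ 1) :
    (f 1 / 2) ^ (-(1:ℝ)/2) * t⁻¹ ≤ gker f t := by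
  have hf1 : 0 < f 1 := hfpos 1 one_pos
  have hF : Fint f t ≤ (f 1 / 2) * t ^ 2 := Fint_le_quad hm hf0 hfC1 hfnn hfscal ht ht1
  have hFpos : 0 < Fint f t := Fint_pos hfC1 hfpos ht
  have h1 : ((f 1 / 2) * t ^ 2) ^ (-(1:ℝ)/2) ≤ (Fint f t) ^ (-(1:ℝ)/2) :=
    Real.rpow_le_rpow_of_nonpos hFpos hF (by norm_num)
  refine le_trans (le_of_eq ?_) h1
  rw [Real.mul_rpow (by positivity) (by positivity)]
  congr 1
  rw [← Real.rpow_natCast t 2, ← Real.rpow_mul ht.le, ← Real.rpow_neg_one t]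
  norm_num

lemma Wfun_tendsto_zero_atTop {m M : ℝ} (hm : 0 < m) {f : ℝ → ℝ} (hf0 : f 0 = 0)
    (hfC1 : ContDiff ℝ 1 f) (hfnn : ∀ t, 0 ≤ f t) (hfpos : ∀ t > 0, 0 < f t)
    (hfscal : ∀ t > 0, (1 + m) * f t ≤ t * deriv f t ∧ t * deriv f t ≤ (1 + M) * f t)
    (hWfin : ∀ t > 0, IntegrableOn (gker f) (Set.Ioi t)) :
    Tendsto (Wfun f) (𝓝[>] (0:ℝ)) atTop := by
  set C : ℝ := (f 1 / 2) ^ (-(1:ℝ)/2) with hC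
  have hf1 : 0 < f 1 := hfpos 1 one_pos
  have hCpos : 0 < C := Real.rpow_pos_of_pos (by positivity) _
  have key : ∀ t : ℝ, t ∈ Set.Ioo (0:ℝ) 1 →
      Wfun f 1 + C * Real.log t⁻¹ ≤ Wfun f t := by
    intro t ht
    have h0t : 0 < t := ht.1
    have ht1 : t ≤ 1 := ht.2.le
    have hsplit := Wfun_split hWfin h0t ht1
    have hILB : IntervalIntegrable (fun s => C * s⁻¹) volume t 1 := by
      apply IntervalIntegrable.const_mul
      apply intervalIntegral.intervalIntegrable_inv (f := fun x => x)
      · intro x hx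
        have h1 : min t 1 ≤ x := hx.1
        rw [min_eq_left ht1] at h1
        exact ne_of_gt (lt_of_lt_of_le h0t h1)
      · exact continuous_id.continuousOn
    have hmono : ∫ s in t..1, C * s⁻¹ ≤ ∫ s in t..1, gker f s := by
      apply intervalIntegral.integral_mono_on ht1 hILB
        (gker_intervalIntegrable hWfin h0t one_pos)
      intro x hx
      exact gker_lower hm hf0 hfC1 hfnn hfpos hfscal (lt_of_lt_of_le h0t hx.1) hx.2
    have hval : ∫ s in t..1, C * s⁻¹ = C * Real.log t⁻¹ := by
      rw [intervalIntegral.integral_const_mul, _root_.integral_inv (a := t) (b := 1)]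
      · rw [Real.log_div one_ne_zero (ne_of_gt h0t), Real.log_one, Real.log_inv]; ring_nf
      · intro h
        rcases h with ⟨h1, _⟩
        simp [min_eq_left ht1] at h1
        linarith
    rw [hsplit]
    rw [hval] at hmono
    linarith
  have hlim : Tendsto (fun t : ℝ => Wfun f 1 + C * Real.log t⁻¹) (𝓝[>] (0:ℝ)) atTop := by
    apply tendsto_atTop_add_const_left
    apply Tendsto.const_mul_atTop hCpos
    exact Real.tendsto_log_atTop.comp tendsto_inv_nhdsGT_zero
  apply tendsto_atTop_mono' _ _ hlim
  filter_upwards [Ioo_mem_nhdsGT_of_mem (Set.mem_Ico.2 ⟨le_rfl, one_pos⟩)] with t ht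
  exact key t ht


/-- `W` is a strictly decreasing `C¹` bijection of `(0,∞)` onto `(0,∞)` with
`W'(t) = -F(t)^{-1/2}`, `W(0+) = ∞` and `W(∞) = 0`. -/
theorem W_strictly_decreasing_C1_bijection
    (m M : ℝ) (hm : 0 < m) (hmM : m ≤ M)
    (f : ℝ → ℝ) (hf0 : f 0 = 0) (hfnn : ∀ t, 0 ≤ f t) (hfpos : ∀ t > 0, 0 < f t)
    (hfC1 : ContDiff ℝ 1 f) (hfmono : Monotone f)
    (hfscal : ∀ t > 0, (1 + m) * f t ≤ t * deriv f t ∧ t * deriv f t ≤ (1 + M) * f t)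
    (hWfin : ∀ t > 0, IntegrableOn (fun s => (Fint f s) ^ (-(1:ℝ)/2)) (Set.Ioi t)) :
    StrictAntiOn (Wfun f) (Set.Ioi 0) ∧
    (∀ t > 0, 0 < Wfun f t) ∧
    (∀ y > 0, ∃ t > 0, Wfun f t = y) ∧
    ContDiffOn ℝ 1 (Wfun f) (Set.Ioi 0) ∧
    (∀ t > 0, HasDerivAt (Wfun f) (-((Fint f t) ^ (-(1:ℝ)/2))) t) ∧
    Tendsto (Wfun f) (𝓝[>] (0:ℝ)) atTop ∧
    Tendsto (Wfun f) atTop (𝓝 0) := by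
  have hW : ∀ t > 0, IntegrableOn (gker f) (Set.Ioi t) := hWfin
  have hderiv : ∀ t, 0 < t → HasDerivAt (Wfun f) (-(gker f t)) t :=
    fun t ht => Wfun_hasDerivAt hfC1 hfpos hW ht
  have h0 : Tendsto (Wfun f) (𝓝[>] (0:ℝ)) atTop :=
    Wfun_tendsto_zero_atTop hm hf0 hfC1 hfnn hfpos hfscal hW
  have hT : Tendsto (Wfun f) atTop (𝓝 0) := Wfun_tendsto_atTop_zero hW
  refine ⟨Wfun_strictAntiOn hfC1 hfpos hW, fun t ht => Wfun_pos hfC1 hfpos hW ht, ?_, ?_,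
    fun t ht => hderiv t ht, h0, hT⟩
  · intro y hy
    have hcont : ContinuousOn (Wfun f) (Set.Ioi 0) :=
      fun x hx => (hderiv x hx).continuousAt.continuousWithinAt
    obtain ⟨a, hya, ha0⟩ :=
      ((h0.eventually (eventually_gt_atTop y)).and eventually_mem_nhdsWithin).exists
    obtain ⟨b, hWb, hab1⟩ :=
      ((hT.eventually (Iio_mem_nhds hy)).and (eventually_ge_atTop (a + 1))).exists
    have ha0' : (0:ℝ) < a := ha0
    have hab : a ≤ b := by linarith
    have hsub : Set.Icc a b ⊆ Set.Ioi 0 := fun x hx => lt_of_lt_of_le ha0' hx.1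
    obtain ⟨t, ht, hWt⟩ := intermediate_value_Icc' hab (hcont.mono hsub)
      ⟨le_of_lt hWb, le_of_lt hya⟩
    exact ⟨t, lt_of_lt_of_le ha0' ht.1, hWt⟩
  · rw [show (1 : WithTop ℕ∞) = 0 + 1 by norm_num,
      contDiffOn_succ_iff_deriv_of_isOpen isOpen_Ioi]
    refine ⟨fun x hx => (hderiv x hx).differentiableAt.differentiableWithinAt, by simp, ?_⟩
    rw [contDiffOn_zero]
    apply ContinuousOn.congr ((gker_contOn hfC1 hfpos).neg)
    intro x hx
    exact (hderiv x hx).deriv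
end
end

section
/- For all t > 0 one has (2·√(2+m)/M)·√(t/f(t)) ≤ W(t) ≤ (2·√(2+M)/m)·√(t/f(t)). -/
open MeasureTheory Set Filter Topology

noncomputable section

/-- Generic closed-form computation. -/
lemma calc_eq (t ft K μ : ℝ) (ht : 0 < t) (hft : 0 < ft) (hK : 0 < K) (hμ : 0 < μ) :
    (ft * t ^ (-(1+μ):ℝ) / K) ^ (-(1:ℝ)/2) * (-t ^ ((2+μ)*(-(1:ℝ)/2) + 1) / ((2+μ)*(-(1:ℝ)/2) + 1)) =
    2 * Real.sqrt K / μ * Real.sqrt (t / ft) := by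
  have h1 : (2+μ)*(-(1:ℝ)/2) + 1 = -(μ/2) := by ring
  rw [h1]
  have htμ : (0:ℝ) < t ^ (-(1+μ):ℝ) := Real.rpow_pos_of_pos ht _
  have hbase : (0:ℝ) < ft * t ^ (-(1+μ):ℝ) / K := by positivity
  have hL : 0 ≤ (ft * t ^ (-(1+μ):ℝ) / K) ^ (-(1:ℝ)/2) * (-t ^ (-(μ/2):ℝ) / (-(μ/2))) := by
    have : -t ^ (-(μ/2):ℝ) / (-(μ/2)) = t ^ (-(μ/2):ℝ) / (μ/2) := by ring
    rw [this]
    positivity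
  have hR : 0 ≤ 2 * Real.sqrt K / μ * Real.sqrt (t / ft) := by positivity
  rw [← Real.sqrt_sq hL, ← Real.sqrt_sq hR]
  congr 1
  have sq_rpow : ∀ x : ℝ, 0 < x → (x ^ (-(1:ℝ)/2)) ^ 2 = x⁻¹ := by
    intro x hx
    rw [sq, ← Real.rpow_add hx]
    norm_num [Real.rpow_neg_one]
  rw [mul_pow, mul_pow, sq_rpow _ hbase]
  have e1 : (2 * Real.sqrt K / μ) ^ 2 = 4 * K / μ ^ 2 := by
    rw [div_pow, mul_pow, Real.sq_sqrt hK.le]; ring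
  have e2 : Real.sqrt (t/ft) ^ 2 = t/ft := Real.sq_sqrt (by positivity)
  rw [e1, e2, div_pow, neg_sq, neg_sq]
  have h3 : (t ^ (-(μ/2):ℝ)) ^ 2 = (t ^ μ)⁻¹ := by
    rw [sq, ← Real.rpow_add ht]
    have : -(μ/2) + -(μ/2) = -μ := by ring
    rw [this, Real.rpow_neg ht.le]
  rw [h3]
  have h4 : t ^ (-(1+μ):ℝ) = (t * t ^ μ)⁻¹ := by
    rw [Real.rpow_neg ht.le, Real.rpow_add ht, Real.rpow_one]
  rw [h4]
  have htm : (0:ℝ) < t ^ μ := Real.rpow_pos_of_pos ht _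
  field_simp
  ring

/-- `W(t) ≍ √(t/f(t))` with explicit constants. -/
theorem W_comparable_sqrt_t_over_f
    (m M : ℝ) (hm : 0 < m) (hmM : m ≤ M)
    (f : ℝ → ℝ) (hf0 : f 0 = 0) (hfnn : ∀ t, 0 ≤ f t) (hfpos : ∀ t > 0, 0 < f t)
    (hfC1 : ContDiff ℝ 1 f) (hfmono : Monotone f)
    (hfscal : ∀ t > 0, (1 + m) * f t ≤ t * deriv f t ∧ t * deriv f t ≤ (1 + M) * f t)
    (hWfin : ∀ t > 0, IntegrableOn (fun s => (Fint f s) ^ (-(1:ℝ)/2)) (Set.Ioi t)) :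
    ∀ t > 0, (2 * Real.sqrt (2 + m) / M) * Real.sqrt (t / f t) ≤ Wfun f t ∧
      Wfun f t ≤ (2 * Real.sqrt (2 + M) / m) * Real.sqrt (t / f t) := by
  have hM : 0 < M := lt_of_lt_of_le hm hmM
  have hfc : Continuous f := hfC1.continuous
  have hfd : Differentiable ℝ f := hfC1.differentiable one_ne_zero
  have hF : ∀ s : ℝ, HasDerivAt (Fint f) (f s) s := fun s =>
    (hfc.integral_hasStrictDerivAt 0 s).hasDerivAt
  have hFpos : ∀ s, 0 < s → 0 < Fint f s := by
    intro s hs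
    exact intervalIntegral.intervalIntegral_pos_of_pos_on
      (hfc.intervalIntegrable 0 s) (fun x hx => hfpos x hx.1) hs
  -- (2+m) F s ≤ s f s ≤ (2+M) F s
  have key1 : ∀ s, 0 ≤ s → (2+m) * Fint f s ≤ s * f s := by
    have hg' : ∀ x : ℝ, HasDerivAt (fun x => x * f x - (2+m) * Fint f x)
        (1 * f x + x * deriv f x - (2+m) * f x) x := fun x =>
      ((hasDerivAt_id x).mul (hfd x).hasDerivAt).sub ((hF x).const_mul (2+m))
    have hmono : MonotoneOn (fun x => x * f x - (2+m) * Fint f x) (Ici (0:ℝ)) := by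
      apply monotoneOn_of_hasDerivWithinAt_nonneg (convex_Ici 0)
        (fun x _ => (hg' x).continuousAt.continuousWithinAt)
        (fun x _ => (hg' x).hasDerivWithinAt)
      intro x hx
      rw [interior_Ici] at hx
      have := (hfscal x hx).1
      linarith
    intro s hs
    have h0 := hmono (self_mem_Ici) hs hs
    simp only [Fint, intervalIntegral.integral_same, hf0] at h0
    simp only [Fint] at h0 ⊢
    linarith
  have key2 : ∀ s, 0 ≤ s → s * f s ≤ (2+M) * Fint f s := by
    have hg' : ∀ x : ℝ, HasDerivAt (fun x => (2+M) * Fint f x - x * f x)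
        ((2+M) * f x - (1 * f x + x * deriv f x)) x := fun x =>
      ((hF x).const_mul (2+M)).sub ((hasDerivAt_id x).mul (hfd x).hasDerivAt)
    have hmono : MonotoneOn (fun x => (2+M) * Fint f x - x * f x) (Ici (0:ℝ)) := by
      apply monotoneOn_of_hasDerivWithinAt_nonneg (convex_Ici 0)
        (fun x _ => (hg' x).continuousAt.continuousWithinAt)
        (fun x _ => (hg' x).hasDerivWithinAt)
      intro x hx
      rw [interior_Ici] at hx
      have := (hfscal x hx).2
      linarith
    intro s hs
    have h0 := hmono (self_mem_Ici) hs hs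
    simp only [Fint, intervalIntegral.integral_same, hf0] at h0
    simp only [Fint] at h0 ⊢
    linarith
  intro t ht
  have hft := hfpos t ht
  -- power comparison of f on [t, ∞)
  have pow_low : ∀ s, t < s → f t * t ^ (-(1+m):ℝ) * s ^ ((1+m):ℝ) ≤ f s := by
    have hmono : MonotoneOn (fun x => f x * x ^ (-(1+m):ℝ)) (Ici t) := by
      apply monotoneOn_of_hasDerivWithinAt_nonneg (convex_Ici t)
        (fun x hx => ((hfc.continuousAt).mul
          ((Real.continuousAt_rpow_const x _ (Or.inl (ne_of_gt (lt_of_lt_of_le ht hx)))))).continuousWithinAt)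
        (f' := fun x => deriv f x * x ^ (-(1+m):ℝ) + f x * (-(1+m) * x ^ (-(1+m)-1:ℝ)))
        (fun x hx => by
          rw [interior_Ici] at hx
          exact (((hfd x).hasDerivAt).mul
            (Real.hasDerivAt_rpow_const (Or.inl (ne_of_gt (ht.trans hx))))).hasDerivWithinAt)
      intro x hx
      rw [interior_Ici] at hx
      have hx0 : 0 < x := ht.trans hx
      have h1 := (hfscal x hx0).1
      have h2 : x ^ (-(1+m):ℝ) = x ^ (-(1+m)-1:ℝ) * x := by
        rw [← Real.rpow_add_one (ne_of_gt hx0)]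
        ring_nf
      have h3 : (0:ℝ) < x ^ (-(1+m)-1:ℝ) := Real.rpow_pos_of_pos hx0 _
      rw [h2]
      nlinarith [mul_le_mul_of_nonneg_right h1 h3.le]
    intro s hs
    have h := hmono self_mem_Ici (mem_Ici.mpr hs.le) hs.le
    have hs0 : 0 < s := ht.trans hs
    have hcancel : s ^ (-(1+m):ℝ) * s ^ ((1+m):ℝ) = 1 := by
      rw [← Real.rpow_add hs0, show -(1+m)+(1+m) = (0:ℝ) by ring, Real.rpow_zero]
    calc f t * t ^ (-(1+m):ℝ) * s ^ ((1+m):ℝ)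
        ≤ f s * s ^ (-(1+m):ℝ) * s ^ ((1+m):ℝ) :=
          mul_le_mul_of_nonneg_right h (Real.rpow_nonneg hs0.le _)
      _ = f s := by rw [mul_assoc, hcancel, mul_one]
  have pow_upp : ∀ s, t < s → f s ≤ f t * t ^ (-(1+M):ℝ) * s ^ ((1+M):ℝ) := by
    have hanti : AntitoneOn (fun x => f x * x ^ (-(1+M):ℝ)) (Ici t) := by
      apply antitoneOn_of_hasDerivWithinAt_nonpos (convex_Ici t)
        (fun x hx => ((hfc.continuousAt).mul
          ((Real.continuousAt_rpow_const x _ (Or.inl (ne_of_gt (lt_of_lt_of_le ht hx)))))).continuousWithinAt)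
        (f' := fun x => deriv f x * x ^ (-(1+M):ℝ) + f x * (-(1+M) * x ^ (-(1+M)-1:ℝ)))
        (fun x hx => by
          rw [interior_Ici] at hx
          exact (((hfd x).hasDerivAt).mul
            (Real.hasDerivAt_rpow_const (Or.inl (ne_of_gt (ht.trans hx))))).hasDerivWithinAt)
      intro x hx
      rw [interior_Ici] at hx
      have hx0 : 0 < x := ht.trans hx
      have h1 := (hfscal x hx0).2
      have h2 : x ^ (-(1+M):ℝ) = x ^ (-(1+M)-1:ℝ) * x := by
        rw [← Real.rpow_add_one (ne_of_gt hx0)]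
        ring_nf
      have h3 : (0:ℝ) < x ^ (-(1+M)-1:ℝ) := Real.rpow_pos_of_pos hx0 _
      rw [h2]
      nlinarith [mul_le_mul_of_nonneg_right h1 h3.le]
    intro s hs
    have h := hanti self_mem_Ici (mem_Ici.mpr hs.le) hs.le
    have hs0 : 0 < s := ht.trans hs
    have hcancel : s ^ (-(1+M):ℝ) * s ^ ((1+M):ℝ) = 1 := by
      rw [← Real.rpow_add hs0, show -(1+M)+(1+M) = (0:ℝ) by ring, Real.rpow_zero]
    calc f s = f s * s ^ (-(1+M):ℝ) * s ^ ((1+M):ℝ) := by rw [mul_assoc, hcancel, mul_one]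
      _ ≤ f t * t ^ (-(1+M):ℝ) * s ^ ((1+M):ℝ) :=
          mul_le_mul_of_nonneg_right h (Real.rpow_nonneg hs0.le _)
  -- coefficients
  set c₁ : ℝ := f t * t ^ (-(1+m):ℝ) / (2+M) with hc₁def
  set c₂ : ℝ := f t * t ^ (-(1+M):ℝ) / (2+m) with hc₂def
  have hc₁ : 0 < c₁ := by
    have := Real.rpow_pos_of_pos ht (-(1+m):ℝ); positivity
  have hc₂ : 0 < c₂ := by
    have := Real.rpow_pos_of_pos ht (-(1+M):ℝ); positivity
  -- pointwise bounds on the integrand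
  have hup : ∀ s ∈ Ioi t, (Fint f s) ^ (-(1:ℝ)/2) ≤ c₁ ^ (-(1:ℝ)/2) * s ^ ((2+m) * (-(1:ℝ)/2)) := by
    intro s hs
    rw [mem_Ioi] at hs
    have hs0 : 0 < s := ht.trans hs
    have hFb : c₁ * s ^ ((2+m):ℝ) ≤ Fint f s := by
      have h1 := pow_low s hs
      have h2 := key2 s hs0.le
      have h3 : s * (f t * t ^ (-(1+m):ℝ) * s ^ ((1+m):ℝ)) ≤ s * f s :=
        mul_le_mul_of_nonneg_left h1 hs0.le
      have h4 : s * s ^ ((1+m):ℝ) = s ^ ((2+m):ℝ) := by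
        nth_rewrite 1 [← Real.rpow_one s]
        rw [← Real.rpow_add hs0]; ring_nf
      rw [hc₁def, div_mul_eq_mul_div, div_le_iff₀ (by linarith : (0:ℝ) < 2+M)]
      calc f t * t ^ (-(1+m):ℝ) * s ^ ((2+m):ℝ) = s * (f t * t ^ (-(1+m):ℝ) * s ^ ((1+m):ℝ)) := by
            rw [← h4]; ring
        _ ≤ s * f s := h3
        _ ≤ (2+M) * Fint f s := h2
        _ = Fint f s * (2+M) := by ring
    have hcs : 0 < c₁ * s ^ ((2+m):ℝ) := by
      have := Real.rpow_pos_of_pos hs0 ((2+m):ℝ); positivity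
    have := Real.rpow_le_rpow_of_nonpos hcs hFb (by norm_num : -(1:ℝ)/2 ≤ 0)
    calc (Fint f s) ^ (-(1:ℝ)/2) ≤ (c₁ * s ^ ((2+m):ℝ)) ^ (-(1:ℝ)/2) := this
      _ = c₁ ^ (-(1:ℝ)/2) * s ^ ((2+m) * (-(1:ℝ)/2)) := by
          rw [Real.mul_rpow hc₁.le (Real.rpow_nonneg hs0.le _), ← Real.rpow_mul hs0.le]
  have hlo : ∀ s ∈ Ioi t, c₂ ^ (-(1:ℝ)/2) * s ^ ((2+M) * (-(1:ℝ)/2)) ≤ (Fint f s) ^ (-(1:ℝ)/2) := by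
    intro s hs
    rw [mem_Ioi] at hs
    have hs0 : 0 < s := ht.trans hs
    have hFb : Fint f s ≤ c₂ * s ^ ((2+M):ℝ) := by
      have h1 := pow_upp s hs
      have h2 := key1 s hs0.le
      have h3 : s * f s ≤ s * (f t * t ^ (-(1+M):ℝ) * s ^ ((1+M):ℝ)) :=
        mul_le_mul_of_nonneg_left h1 hs0.le
      have h4 : s * s ^ ((1+M):ℝ) = s ^ ((2+M):ℝ) := by
        nth_rewrite 1 [← Real.rpow_one s]
        rw [← Real.rpow_add hs0]; ring_nf
      rw [hc₂def, div_mul_eq_mul_div, le_div_iff₀ (by linarith : (0:ℝ) < 2+m)]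
      calc Fint f s * (2+m) = (2+m) * Fint f s := by ring
        _ ≤ s * f s := h2
        _ ≤ s * (f t * t ^ (-(1+M):ℝ) * s ^ ((1+M):ℝ)) := h3
        _ = f t * t ^ (-(1+M):ℝ) * s ^ ((2+M):ℝ) := by rw [← h4]; ring
    have hFs : 0 < Fint f s := hFpos s hs0
    have := Real.rpow_le_rpow_of_nonpos hFs hFb (by norm_num : -(1:ℝ)/2 ≤ 0)
    calc c₂ ^ (-(1:ℝ)/2) * s ^ ((2+M) * (-(1:ℝ)/2))
        = (c₂ * s ^ ((2+M):ℝ)) ^ (-(1:ℝ)/2) := by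
          rw [Real.mul_rpow hc₂.le (Real.rpow_nonneg hs0.le _), ← Real.rpow_mul hs0.le]
      _ ≤ (Fint f s) ^ (-(1:ℝ)/2) := this
  -- exponents
  have hr₁ : (2+m) * (-(1:ℝ)/2) < -1 := by nlinarith
  have hr₂ : (2+M) * (-(1:ℝ)/2) < -1 := by nlinarith
  have hint₁ : IntegrableOn (fun s : ℝ => c₁ ^ (-(1:ℝ)/2) * s ^ ((2+m) * (-(1:ℝ)/2))) (Ioi t) :=
    (integrableOn_Ioi_rpow_of_lt hr₁ ht).const_mul _
  have hint₂ : IntegrableOn (fun s : ℝ => c₂ ^ (-(1:ℝ)/2) * s ^ ((2+M) * (-(1:ℝ)/2))) (Ioi t) :=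
    (integrableOn_Ioi_rpow_of_lt hr₂ ht).const_mul _
  constructor
  · -- lower bound
    have hW : c₂ ^ (-(1:ℝ)/2) * (-t ^ ((2+M) * (-(1:ℝ)/2) + 1) / ((2+M) * (-(1:ℝ)/2) + 1))
        ≤ Wfun f t := by
      have := setIntegral_mono_on hint₂ (hWfin t ht) measurableSet_Ioi hlo
      rw [MeasureTheory.integral_const_mul, integral_Ioi_rpow_of_lt hr₂ ht] at this
      exact this
    calc 2 * Real.sqrt (2 + m) / M * Real.sqrt (t / f t)
        = c₂ ^ (-(1:ℝ)/2) * (-t ^ ((2+M) * (-(1:ℝ)/2) + 1) / ((2+M) * (-(1:ℝ)/2) + 1)) := by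
          rw [hc₂def]
          exact (calc_eq t (f t) (2+m) M ht hft (by linarith) hM).symm
      _ ≤ Wfun f t := hW
  · -- upper bound
    have hW : Wfun f t
        ≤ c₁ ^ (-(1:ℝ)/2) * (-t ^ ((2+m) * (-(1:ℝ)/2) + 1) / ((2+m) * (-(1:ℝ)/2) + 1)) := by
      have := setIntegral_mono_on (hWfin t ht) hint₁ measurableSet_Ioi hup
      rw [MeasureTheory.integral_const_mul, integral_Ioi_rpow_of_lt hr₁ ht] at this
      exact this
    calc Wfun f t ≤ c₁ ^ (-(1:ℝ)/2) * (-t ^ ((2+m) * (-(1:ℝ)/2) + 1) / ((2+m) * (-(1:ℝ)/2) + 1)) := hW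
      _ = 2 * Real.sqrt (2 + M) / m * Real.sqrt (t / f t) := by
          rw [hc₁def]
          exact calc_eq t (f t) (2+M) m ht hft (by linarith) hm
end
end

section
/- The function ψ is C² on (0,∞) with ψ''(t) = f(ψ(t))/2 for all t > 0, and there exist constants c₁, c₂ > 0 depending only on m and M such that c₁ ≤ t²·ψ''(t)/ψ(t) ≤ c₂ and c₁ ≤ t²·ψ'(t)²/ψ(t)² ≤ c₂ for all t > 0. -/
open MeasureTheory Set Filter Topology

noncomputable section

lemma F_hasDeriv {f : ℝ → ℝ} (hc : Continuous f) (t : ℝ) :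
    HasDerivAt (Fint f) (f t) t :=
  (hc.integral_hasStrictDerivAt 0 t).hasDerivAt

lemma F_pos {f : ℝ → ℝ} (hc : Continuous f) (hfpos : ∀ t > 0, 0 < f t) {t : ℝ} (ht : 0 < t) :
    0 < Fint f t := by
  apply intervalIntegral.intervalIntegral_pos_of_pos_on (hc.intervalIntegrable 0 t)
    (fun x hx => hfpos x hx.1) ht

lemma F_cont {f : ℝ → ℝ} (hc : Continuous f) : Continuous (Fint f) := by
  have : Differentiable ℝ (Fint f) := fun x => (F_hasDeriv hc x).differentiableAt
  exact this.continuous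

lemma F_scal {m M : ℝ} {f : ℝ → ℝ} (hf0 : f 0 = 0)
    (hfC1 : ContDiff ℝ 1 f)
    (hfscal : ∀ t > 0, (1 + m) * f t ≤ t * deriv f t ∧ t * deriv f t ≤ (1 + M) * f t)
    {s : ℝ} (hs : 0 < s) :
    (2 + m) * Fint f s ≤ s * f s ∧ s * f s ≤ (2 + M) * Fint f s := by
  have hc : Continuous f := hfC1.continuous
  have hfd : ∀ x, HasDerivAt f (deriv f x) x :=
    fun x => (hfC1.differentiable one_ne_zero x).hasDerivAt
  have hP : ∀ x, HasDerivAt (fun t => t * f t - (2 + m) * Fint f t)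
      (1 * f x + x * deriv f x - (2 + m) * f x) x := fun x =>
    ((hasDerivAt_id x).mul (hfd x)).sub ((F_hasDeriv hc x).const_mul _)
  have hQ : ∀ x, HasDerivAt (fun t => (2 + M) * Fint f t - t * f t)
      ((2 + M) * f x - (1 * f x + x * deriv f x)) x := fun x =>
    ((F_hasDeriv hc x).const_mul _).sub ((hasDerivAt_id x).mul (hfd x))
  have hF0 : Fint f 0 = 0 := by simp [Fint]
  constructor
  · have mono := monotoneOn_of_deriv_nonneg (convex_Ici 0)
      (Continuous.continuousOn (by have := F_cont hc; fun_prop) :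
        ContinuousOn (fun t => t * f t - (2 + m) * Fint f t) (Ici 0))
      (fun x _ => ((hP x).differentiableAt).differentiableWithinAt)
      (fun x hx => by
        rw [(hP x).deriv]
        have := (hfscal x (by simpa using hx)).1
        nlinarith)
    have := mono (self_mem_Ici) (mem_Ici.2 hs.le) hs.le
    simp only [hF0, hf0] at this
    nlinarith
  · have mono := monotoneOn_of_deriv_nonneg (convex_Ici 0)
      (Continuous.continuousOn (by have := F_cont hc; fun_prop) :
        ContinuousOn (fun t => (2 + M) * Fint f t - t * f t) (Ici 0))
      (fun x _ => ((hQ x).differentiableAt).differentiableWithinAt)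
      (fun x hx => by
        rw [(hQ x).deriv]
        have := (hfscal x (by simpa using hx)).2
        nlinarith)
    have := mono (self_mem_Ici) (mem_Ici.2 hs.le) hs.le
    simp only [hF0, hf0] at this
    nlinarith

section W
variable {f : ℝ → ℝ}

lemma g_contAt (hc : Continuous f) (hfpos : ∀ t > 0, 0 < f t) {t : ℝ} (ht : 0 < t) :
    ContinuousAt (fun s => (Fint f s) ^ (-(1:ℝ)/2)) t :=
  ((F_cont hc).continuousAt).rpow_const (Or.inl (F_pos hc hfpos ht).ne')

lemma g_pos (hc : Continuous f) (hfpos : ∀ t > 0, 0 < f t) {t : ℝ} (ht : 0 < t) :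
    0 < (Fint f t) ^ (-(1:ℝ)/2) :=
  Real.rpow_pos_of_pos (F_pos hc hfpos ht) _

lemma g_intervalIntegrable (hc : Continuous f) (hfpos : ∀ t > 0, 0 < f t) {a b : ℝ}
    (ha : 0 < a) (hab : a ≤ b) :
    IntervalIntegrable (fun s => (Fint f s) ^ (-(1:ℝ)/2)) volume a b := by
  apply ContinuousOn.intervalIntegrable
  intro x hx
  rw [uIcc_of_le hab] at hx
  exact (g_contAt hc hfpos (lt_of_lt_of_le ha hx.1)).continuousWithinAt

lemma W_split (hWfin : ∀ t > 0, IntegrableOn (fun s => (Fint f s) ^ (-(1:ℝ)/2)) (Set.Ioi t))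
    (hc : Continuous f) (hfpos : ∀ t > 0, 0 < f t) {a b : ℝ} (ha : 0 < a) (hab : a ≤ b) :
    Wfun f a = (∫ s in a..b, (Fint f s) ^ (-(1:ℝ)/2)) + Wfun f b := by
  have hb : 0 < b := lt_of_lt_of_le ha hab
  rw [Wfun, Wfun, ← Ioc_union_Ioi_eq_Ioi hab,
    setIntegral_union (Ioc_disjoint_Ioi le_rfl) measurableSet_Ioi
      ((hWfin a ha).mono_set Ioc_subset_Ioi_self) (hWfin b hb),
    intervalIntegral.integral_of_le hab]

lemma W_hasDeriv (hWfin : ∀ t > 0, IntegrableOn (fun s => (Fint f s) ^ (-(1:ℝ)/2)) (Set.Ioi t))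
    (hc : Continuous f) (hfpos : ∀ t > 0, 0 < f t) {t : ℝ} (ht : 0 < t) :
    HasDerivAt (Wfun f) (-((Fint f t) ^ (-(1:ℝ)/2))) t := by
  set a := t / 2 with ha_def
  have ha : 0 < a := by positivity
  have hat : a < t := by simpa [ha_def] using (by linarith : t/2 < t)
  have hint : HasDerivAt (fun u => ∫ x in a..u, (Fint f x) ^ (-(1:ℝ)/2))
      ((Fint f t) ^ (-(1:ℝ)/2)) t :=
    intervalIntegral.integral_hasDerivAt_right (g_intervalIntegrable hc hfpos ha hat.le)
      (ContinuousAt.stronglyMeasurableAtFilter isOpen_Ioi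
        (fun x hx => g_contAt hc hfpos hx) t ht)
      (g_contAt hc hfpos ht)
  have heq : Wfun f =ᶠ[𝓝 t] fun u => Wfun f a - ∫ x in a..u, (Fint f x) ^ (-(1:ℝ)/2) := by
    filter_upwards [eventually_gt_nhds hat] with u hu
    have := W_split hWfin hc hfpos ha hu.le
    linarith
  have h2 : HasDerivAt (fun u => Wfun f a - ∫ x in a..u, (Fint f x) ^ (-(1:ℝ)/2))
      (-((Fint f t) ^ (-(1:ℝ)/2))) t := by
    exact ((hasDerivAt_const t (Wfun f a)).sub hint).congr_deriv (zero_sub _)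
  exact h2.congr_of_eventuallyEq heq

lemma W_pos (hWfin : ∀ t > 0, IntegrableOn (fun s => (Fint f s) ^ (-(1:ℝ)/2)) (Set.Ioi t))
    (hc : Continuous f) (hfpos : ∀ t > 0, 0 < f t) {t : ℝ} (ht : 0 < t) :
    0 < Wfun f t := by
  rw [W_split hWfin hc hfpos ht (by linarith : t ≤ t + 1)]
  have h1 : 0 < ∫ s in t..(t+1), (Fint f s) ^ (-(1:ℝ)/2) :=
    intervalIntegral.intervalIntegral_pos_of_pos_on
      (g_intervalIntegrable hc hfpos ht (by linarith))
      (fun x hx => g_pos hc hfpos (ht.trans hx.1)) (by linarith)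
  have h2 : 0 ≤ Wfun f (t + 1) :=
    setIntegral_nonneg measurableSet_Ioi
      (fun x hx => (g_pos hc hfpos (by linarith [mem_Ioi.1 hx])).le)
  linarith

lemma W_tendsto_zero
    (hWfin : ∀ t > 0, IntegrableOn (fun s => (Fint f s) ^ (-(1:ℝ)/2)) (Set.Ioi t))
    (hc : Continuous f) (hfpos : ∀ t > 0, 0 < f t) :
    Tendsto (Wfun f) atTop (𝓝 0) := by
  have key : Tendsto (fun b => Wfun f 1 - ∫ s in (1:ℝ)..b, (Fint f s) ^ (-(1:ℝ)/2))
      atTop (𝓝 (Wfun f 1 - Wfun f 1)) :=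
    tendsto_const_nhds.sub
      (MeasureTheory.intervalIntegral_tendsto_integral_Ioi 1 (hWfin 1 one_pos) tendsto_id)
  rw [sub_self] at key
  apply key.congr'
  filter_upwards [eventually_ge_atTop (1:ℝ)] with b hb
  have := W_split hWfin hc hfpos one_pos hb
  linarith
end W

lemma tF_tendsto_zero {m M : ℝ} {f : ℝ → ℝ} (hm : 0 < m) (hf0 : f 0 = 0)
    (hfC1 : ContDiff ℝ 1 f) (hfpos : ∀ t > 0, 0 < f t)
    (hfscal : ∀ t > 0, (1 + m) * f t ≤ t * deriv f t ∧ t * deriv f t ≤ (1 + M) * f t) :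
    Tendsto (fun t => t * (Fint f t) ^ (-(1:ℝ)/2)) atTop (𝓝 0) := by
  have hc : Continuous f := hfC1.continuous
  set p : ℝ := -(2 + m) with hp_def
  have hG : ∀ x > (0:ℝ), HasDerivAt (fun t => Fint f t * t ^ p)
      (f x * x ^ p + Fint f x * (p * x ^ (p - 1))) x := fun x hx =>
    (F_hasDeriv hc x).mul (Real.hasDerivAt_rpow_const (Or.inl hx.ne'))
  have hGmono : MonotoneOn (fun t => Fint f t * t ^ p) (Ici 1) := by
    apply monotoneOn_of_deriv_nonneg (convex_Ici 1)
    · intro x hx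
      exact ((hG x (by rw [mem_Ici] at hx; linarith)).differentiableAt).continuousAt.continuousWithinAt
    · intro x hx
      rw [interior_Ici, mem_Ioi] at hx
      exact ((hG x (by linarith)).differentiableAt).differentiableWithinAt
    · intro x hx
      rw [interior_Ici, mem_Ioi] at hx
      have hx0 : (0:ℝ) < x := by linarith
      rw [(hG x hx0).deriv]
      have h1 := (F_scal hf0 hfC1 hfscal hx0).1
      have hxp1 : (0:ℝ) < x ^ (p - 1) := Real.rpow_pos_of_pos hx0 _
      have hxp : x ^ p = x ^ (p - 1) * x := by
        rw [← Real.rpow_add_one hx0.ne']; ring_nf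
      rw [hxp, hp_def]
      nlinarith [mul_nonneg hxp1.le (by linarith : (0:ℝ) ≤ x * f x - (2+m) * Fint f x)]
  have hF1 : 0 < Fint f 1 := F_pos hc hfpos one_pos
  have key : ∀ t ≥ (1:ℝ), t * (Fint f t) ^ (-(1:ℝ)/2) ≤ (Fint f 1) ^ (-(1:ℝ)/2) * t ^ (-(m/2)) := by
    intro t ht
    have ht0 : (0:ℝ) < t := by linarith
    have hmono := hGmono (self_mem_Ici) (mem_Ici.2 ht) ht
    simp only [Real.one_rpow, mul_one] at hmono
    have htp : (0:ℝ) < t ^ p := Real.rpow_pos_of_pos ht0 _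
    have hFlow : Fint f 1 * t ^ (-p) ≤ Fint f t := by
      have : Fint f 1 * t ^ (-p) ≤ (Fint f t * t ^ p) * t ^ (-p) := by nlinarith [Real.rpow_pos_of_pos ht0 (-p)]
      calc Fint f 1 * t ^ (-p) ≤ (Fint f t * t ^ p) * t ^ (-p) := this
        _ = Fint f t := by
          rw [mul_assoc, ← Real.rpow_add ht0]; simp
    have hFlow0 : 0 < Fint f 1 * t ^ (-p) := by positivity
    have hstep : (Fint f t) ^ (-(1:ℝ)/2) ≤ (Fint f 1 * t ^ (-p)) ^ (-(1:ℝ)/2) :=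
      Real.rpow_le_rpow_of_nonpos hFlow0 hFlow (by norm_num)
    have heq : (Fint f 1 * t ^ (-p)) ^ (-(1:ℝ)/2)
        = (Fint f 1) ^ (-(1:ℝ)/2) * t ^ ((-p) * (-(1:ℝ)/2)) := by
      rw [Real.mul_rpow hF1.le (Real.rpow_pos_of_pos ht0 _).le, ← Real.rpow_mul ht0.le]
    have hfin : t * ((Fint f 1) ^ (-(1:ℝ)/2) * t ^ ((-p) * (-(1:ℝ)/2)))
        = (Fint f 1) ^ (-(1:ℝ)/2) * t ^ (-(m/2)) := by
      rw [show (-p) * (-(1:ℝ)/2) = -(m/2) - 1 by rw [hp_def]; ring]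
      rw [Real.rpow_sub ht0, Real.rpow_one]
      field_simp
    calc t * (Fint f t) ^ (-(1:ℝ)/2) ≤ t * ((Fint f 1 * t ^ (-p)) ^ (-(1:ℝ)/2)) := by nlinarith
      _ = t * ((Fint f 1) ^ (-(1:ℝ)/2) * t ^ ((-p) * (-(1:ℝ)/2))) := by rw [heq]
      _ = _ := hfin
  have hlim : Tendsto (fun t : ℝ => (Fint f 1) ^ (-(1:ℝ)/2) * t ^ (-(m/2))) atTop (𝓝 0) := by
    have := (tendsto_rpow_neg_atTop (by linarith : (0:ℝ) < m/2)).const_mul ((Fint f 1) ^ (-(1:ℝ)/2))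
    simpa using this
  apply squeeze_zero'
  · filter_upwards [eventually_gt_atTop (0:ℝ)] with t ht
    have := F_pos hc hfpos ht
    positivity
  · filter_upwards [eventually_ge_atTop (1:ℝ)] with t ht using key t ht
  · exact hlim

lemma u_hasDeriv {f : ℝ → ℝ} (hc : Continuous f) (hfpos : ∀ t > 0, 0 < f t) {t : ℝ} (ht : 0 < t) :
    HasDerivAt (fun x => x * (Fint f x) ^ (-(1:ℝ)/2))
      (1 * (Fint f t) ^ (-(1:ℝ)/2)
        + t * (f t * (-(1:ℝ)/2) * (Fint f t) ^ (-(1:ℝ)/2 - 1))) t :=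
  (hasDerivAt_id t).mul ((F_hasDeriv hc t).rpow_const (Or.inl (F_pos hc hfpos ht).ne'))

lemma W_comp {m M : ℝ} {f : ℝ → ℝ} (hm : 0 < m) (hmM : m ≤ M) (hf0 : f 0 = 0)
    (hfC1 : ContDiff ℝ 1 f) (hfpos : ∀ t > 0, 0 < f t)
    (hfscal : ∀ t > 0, (1 + m) * f t ≤ t * deriv f t ∧ t * deriv f t ≤ (1 + M) * f t)
    (hWfin : ∀ t > 0, IntegrableOn (fun s => (Fint f s) ^ (-(1:ℝ)/2)) (Set.Ioi t))
    {t : ℝ} (ht : 0 < t) :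
    m / 2 * Wfun f t ≤ t * (Fint f t) ^ (-(1:ℝ)/2)
      ∧ t * (Fint f t) ^ (-(1:ℝ)/2) ≤ M / 2 * Wfun f t := by
  have hc : Continuous f := hfC1.continuous
  -- derivative facts for h c := u - (c/2) W
  have hder : ∀ c : ℝ, ∀ x > (0:ℝ), HasDerivAt (fun y => y * (Fint f y) ^ (-(1:ℝ)/2) - c/2 * Wfun f y)
      ((1 * (Fint f x) ^ (-(1:ℝ)/2)
        + x * (f x * (-(1:ℝ)/2) * (Fint f x) ^ (-(1:ℝ)/2 - 1)))
        - c/2 * (-((Fint f x) ^ (-(1:ℝ)/2)))) x := fun c x hx =>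
    (u_hasDeriv hc hfpos hx).sub ((W_hasDeriv hWfin hc hfpos hx).const_mul _)
  have htends : ∀ c : ℝ, Tendsto (fun y => y * (Fint f y) ^ (-(1:ℝ)/2) - c/2 * Wfun f y)
      atTop (𝓝 0) := by
    intro c
    have := (tF_tendsto_zero hm hf0 hfC1 hfpos hfscal).sub
      ((W_tendsto_zero hWfin hc hfpos).const_mul (c/2))
    simpa using this
  have hCval : ∀ x > (0:ℝ), (Fint f x) ^ (-(1:ℝ)/2 - 1) = (Fint f x) ^ (-(1:ℝ)/2) / Fint f x := by
    intro x hx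
    rw [Real.rpow_sub (F_pos hc hfpos hx), Real.rpow_one]
  constructor
  · -- antitone
    have hanti : AntitoneOn (fun y => y * (Fint f y) ^ (-(1:ℝ)/2) - m/2 * Wfun f y) (Ioi 0) := by
      apply antitoneOn_of_deriv_nonpos (convex_Ioi 0)
      · exact fun x hx => ((hder m x hx).differentiableAt).continuousAt.continuousWithinAt
      · intro x hx
        rw [isOpen_Ioi.interior_eq] at hx
        exact ((hder m x hx).differentiableAt).differentiableWithinAt
      · intro x hx
        rw [isOpen_Ioi.interior_eq, mem_Ioi] at hx
        rw [(hder m x hx).deriv, hCval x hx]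
        have hA : 0 < Fint f x := F_pos hc hfpos hx
        have hB : 0 < (Fint f x) ^ (-(1:ℝ)/2) := Real.rpow_pos_of_pos hA _
        have h1 := (F_scal hf0 hfC1 hfscal hx).1
        have hkey : (2 + m) * (Fint f x) ^ (-(1:ℝ)/2) ≤ x * f x * ((Fint f x) ^ (-(1:ℝ)/2) / Fint f x) := by
          rw [← mul_div_assoc, le_div_iff₀ hA]
          nlinarith [mul_le_mul_of_nonneg_right h1 hB.le]
        nlinarith
    have hle : (0:ℝ) ≤ t * (Fint f t) ^ (-(1:ℝ)/2) - m/2 * Wfun f t := by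
      apply le_of_tendsto (htends m)
      filter_upwards [eventually_ge_atTop t] with s hs
      exact hanti (mem_Ioi.2 ht) (mem_Ioi.2 (lt_of_lt_of_le ht hs)) hs
    linarith
  · have hmono : MonotoneOn (fun y => y * (Fint f y) ^ (-(1:ℝ)/2) - M/2 * Wfun f y) (Ioi 0) := by
      apply monotoneOn_of_deriv_nonneg (convex_Ioi 0)
      · exact fun x hx => ((hder M x hx).differentiableAt).continuousAt.continuousWithinAt
      · intro x hx
        rw [isOpen_Ioi.interior_eq] at hx
        exact ((hder M x hx).differentiableAt).differentiableWithinAt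
      · intro x hx
        rw [isOpen_Ioi.interior_eq, mem_Ioi] at hx
        rw [(hder M x hx).deriv, hCval x hx]
        have hA : 0 < Fint f x := F_pos hc hfpos hx
        have hB : 0 < (Fint f x) ^ (-(1:ℝ)/2) := Real.rpow_pos_of_pos hA _
        have h1 := (F_scal hf0 hfC1 hfscal hx).2
        have hkey : x * f x * ((Fint f x) ^ (-(1:ℝ)/2) / Fint f x) ≤ (2 + M) * (Fint f x) ^ (-(1:ℝ)/2) := by
          rw [← mul_div_assoc, div_le_iff₀ hA]
          nlinarith [mul_le_mul_of_nonneg_right h1 hB.le]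
        nlinarith
    have hge : t * (Fint f t) ^ (-(1:ℝ)/2) - M/2 * Wfun f t ≤ 0 := by
      apply ge_of_tendsto (htends M)
      filter_upwards [eventually_ge_atTop t] with s hs
      exact hmono (mem_Ioi.2 ht) (mem_Ioi.2 (lt_of_lt_of_le ht hs)) hs
    linarith

lemma psi_contAt {f : ℝ → ℝ} {ψ : ℝ → ℝ}
    (hWfin : ∀ t > 0, IntegrableOn (fun s => (Fint f s) ^ (-(1:ℝ)/2)) (Set.Ioi t))
    (hc : Continuous f) (hfpos : ∀ t > 0, 0 < f t)
    (hψpos : ∀ t > 0, 0 < ψ t)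
    (hψW : ∀ t > 0, ψ (Wfun f t) = t) (hWψ : ∀ t > 0, Wfun f (ψ t) = t)
    {t : ℝ} (ht : 0 < t) : ContinuousAt ψ t := by
  have hWanti : AntitoneOn (Wfun f) (Ioi 0) := by
    apply antitoneOn_of_deriv_nonpos (convex_Ioi 0)
    · exact fun x hx => ((W_hasDeriv hWfin hc hfpos hx).differentiableAt).continuousAt.continuousWithinAt
    · intro x hx
      rw [isOpen_Ioi.interior_eq] at hx
      exact ((W_hasDeriv hWfin hc hfpos hx).differentiableAt).differentiableWithinAt
    · intro x hx
      rw [isOpen_Ioi.interior_eq, mem_Ioi] at hx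
      rw [(W_hasDeriv hWfin hc hfpos hx).deriv]
      exact neg_nonpos.2 (g_pos hc hfpos hx).le
  have hsm : StrictMonoOn (fun x => -ψ x) (Ioi 0) := by
    intro a ha b hb hab
    simp only [neg_lt_neg_iff]
    by_contra hcon
    push_neg at hcon
    have := hWanti (mem_Ioi.2 (hψpos a ha)) (mem_Ioi.2 (hψpos b hb)) hcon
    rw [hWψ a ha, hWψ b hb] at this
    exact absurd this (not_le.2 hab)
  have himg : (fun x => -ψ x) '' (Ioi 0) ∈ 𝓝 (-ψ t) := by
    apply mem_of_superset (isOpen_Iio.mem_nhds (neg_lt_zero.2 (hψpos t ht)))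
    intro y hy
    rw [mem_Iio] at hy
    have hypos : 0 < -y := by linarith
    exact ⟨Wfun f (-y), mem_Ioi.2 (W_pos hWfin hc hfpos hypos), by simp only []; rw [hψW (-y) hypos]; ring⟩
  have := hsm.continuousAt_of_image_mem_nhds (isOpen_Ioi.mem_nhds ht) himg
  simpa only [Pi.neg_def, neg_neg] using this.neg


set_option maxHeartbeats 1000000 in
/-- `ψ` is `C²` with `ψ'' = f(ψ)/2`, and `t²ψ''/ψ ≍ 1 ≍ t²(ψ')²/ψ²` with constants
depending only on `m` and `M`. -/
theorem psi_second_derivative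
    (m M : ℝ) (hm : 0 < m) (hmM : m ≤ M)
    (f : ℝ → ℝ) (hf0 : f 0 = 0) (hfnn : ∀ t, 0 ≤ f t) (hfpos : ∀ t > 0, 0 < f t)
    (hfC1 : ContDiff ℝ 1 f) (hfmono : Monotone f)
    (hfscal : ∀ t > 0, (1 + m) * f t ≤ t * deriv f t ∧ t * deriv f t ≤ (1 + M) * f t)
    (hWfin : ∀ t > 0, IntegrableOn (fun s => (Fint f s) ^ (-(1:ℝ)/2)) (Set.Ioi t))
    (ψ : ℝ → ℝ) (hψpos : ∀ t > 0, 0 < ψ t)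
    (hψW : ∀ t > 0, ψ (Wfun f t) = t) (hWψ : ∀ t > 0, Wfun f (ψ t) = t) :
    ContDiffOn ℝ 2 ψ (Set.Ioi 0) ∧
    (∀ t > 0, deriv (deriv ψ) t = f (ψ t) / 2) ∧
    ∃ c₁ > (0:ℝ), ∃ c₂ > (0:ℝ), ∀ t > 0,
      (c₁ ≤ t ^ 2 * deriv (deriv ψ) t / ψ t ∧ t ^ 2 * deriv (deriv ψ) t / ψ t ≤ c₂) ∧
      (c₁ ≤ t ^ 2 * (deriv ψ t) ^ 2 / (ψ t) ^ 2 ∧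
        t ^ 2 * (deriv ψ t) ^ 2 / (ψ t) ^ 2 ≤ c₂) := by
  have hc : Continuous f := hfC1.continuous
  have hM : 0 < M := lt_of_lt_of_le hm hmM
  -- first derivative of ψ
  have hψd : ∀ t > 0, HasDerivAt ψ (-((Fint f (ψ t)) ^ ((1:ℝ)/2))) t := by
    intro t ht
    have hs : 0 < ψ t := hψpos t ht
    have hA : 0 < Fint f (ψ t) := F_pos hc hfpos hs
    have h := HasDerivAt.of_local_left_inverse (psi_contAt hWfin hc hfpos hψpos hψW hWψ ht)
      (W_hasDeriv hWfin hc hfpos hs) (neg_ne_zero.2 (g_pos hc hfpos hs).ne')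
      (by filter_upwards [isOpen_Ioi.mem_nhds ht] with y hy using hWψ y hy)
    have heq : (-((Fint f (ψ t)) ^ (-(1:ℝ)/2)))⁻¹ = -((Fint f (ψ t)) ^ ((1:ℝ)/2)) := by
      rw [show (-(1:ℝ)/2) = -((1:ℝ)/2) by norm_num, Real.rpow_neg hA.le, inv_neg, inv_inv]
    rwa [heq] at h
  -- second derivative function
  set u : ℝ → ℝ := fun x => -((Fint f (ψ x)) ^ ((1:ℝ)/2)) with hu_def
  have hud : ∀ t > 0, HasDerivAt u (f (ψ t) / 2) t := by
    intro t ht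
    have hs : 0 < ψ t := hψpos t ht
    have hA : 0 < Fint f (ψ t) := F_pos hc hfpos hs
    have hcomp : HasDerivAt (fun x => Fint f (ψ x))
        (f (ψ t) * (-((Fint f (ψ t)) ^ ((1:ℝ)/2)))) t :=
      (F_hasDeriv hc (ψ t)).comp t (hψd t ht)
    have h2 := (hcomp.rpow_const (p := (1:ℝ)/2) (Or.inl hA.ne')).neg
    have hAmul : (Fint f (ψ t)) ^ ((1:ℝ)/2) * (Fint f (ψ t)) ^ ((1:ℝ)/2 - 1) = 1 := by
      rw [← Real.rpow_add hA]; norm_num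
    exact h2.congr_deriv (by linear_combination ((f (ψ t))/2) * hAmul)
  -- deriv values
  have hder1 : ∀ t > 0, deriv ψ t = -((Fint f (ψ t)) ^ ((1:ℝ)/2)) := fun t ht => (hψd t ht).deriv
  have hder2 : ∀ t > 0, deriv (deriv ψ) t = f (ψ t) / 2 := by
    intro t ht
    have heq : deriv ψ =ᶠ[𝓝 t] u := by
      filter_upwards [isOpen_Ioi.mem_nhds ht] with y hy using (hψd y hy).deriv
    rw [heq.deriv_eq, (hud t ht).deriv]
  -- smoothness
  have hψdiff : DifferentiableOn ℝ ψ (Ioi 0) :=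
    fun x hx => ((hψd x hx).differentiableAt).differentiableWithinAt
  have hψcont : ContinuousOn ψ (Ioi 0) := hψdiff.continuousOn
  have hucont : ContinuousOn u (Ioi 0) := by
    apply ContinuousOn.neg
    exact (((F_cont hc).comp_continuousOn hψcont).rpow_const
      (fun x hx => Or.inl (F_pos hc hfpos (hψpos x hx)).ne'))
  have hψC1 : ContDiffOn ℝ 1 ψ (Ioi 0) := by
    rw [show (1 : WithTop ℕ∞) = 0 + 1 by norm_num, contDiffOn_succ_iff_deriv_of_isOpen isOpen_Ioi]
    refine ⟨hψdiff, by simp, ?_⟩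
    rw [contDiffOn_zero]
    exact hucont.congr (fun x hx => (hψd x hx).deriv)
  have hFC1 : ContDiff ℝ 1 (Fint f) := by
    rw [contDiff_one_iff_deriv]
    refine ⟨fun x => (F_hasDeriv hc x).differentiableAt, ?_⟩
    have : deriv (Fint f) = f := funext fun x => (F_hasDeriv hc x).deriv
    rw [this]; exact hc
  have huC1 : ContDiffOn ℝ 1 u (Ioi 0) := by
    apply ContDiffOn.neg
    exact ((hFC1.contDiffOn.comp hψC1 (mapsTo_univ _ _)).rpow_const_of_ne
      (fun x hx => (F_pos hc hfpos (hψpos x hx)).ne'))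
  have hψC2 : ContDiffOn ℝ 2 ψ (Ioi 0) := by
    rw [show (2 : WithTop ℕ∞) = 1 + 1 by norm_num, contDiffOn_succ_iff_deriv_of_isOpen isOpen_Ioi]
    exact ⟨hψdiff, by simp, huC1.congr (fun x hx => (hψd x hx).deriv)⟩
  refine ⟨hψC2, hder2, 4 / M ^ 2, by positivity, 2 * (2 + M) / m ^ 2, by positivity, ?_⟩
  intro t ht
  have hs : 0 < ψ t := hψpos t ht
  set s := ψ t with hs_def
  have hA : 0 < Fint f s := F_pos hc hfpos hs
  set B := (Fint f s) ^ ((1:ℝ)/2) with hB_def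
  have hB : 0 < B := Real.rpow_pos_of_pos hA _
  have hB2 : B ^ 2 = Fint f s := by
    rw [hB_def, ← Real.rpow_natCast ((Fint f s) ^ ((1:ℝ)/2)) 2, ← Real.rpow_mul hA.le]
    norm_num
  have hginv : (Fint f s) ^ (-(1:ℝ)/2) = B⁻¹ := by
    rw [show (-(1:ℝ)/2) = -((1:ℝ)/2) by norm_num, Real.rpow_neg hA.le, hB_def]
  have hcomp := W_comp hm hmM hf0 hfC1 hfpos hfscal hWfin hs
  rw [hWψ t ht, hginv] at hcomp
  -- m/2 * t ≤ s * B⁻¹ ≤ M/2 * t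
  have hcomp1 : m / 2 * t * B ≤ s := by
    have := hcomp.1
    have h := mul_le_mul_of_nonneg_right this hB.le
    rwa [mul_assoc s, inv_mul_cancel₀ hB.ne', mul_one] at h
  have hcomp2 : s ≤ M / 2 * t * B := by
    have := hcomp.2
    have h := mul_le_mul_of_nonneg_right this hB.le
    rwa [mul_assoc s, inv_mul_cancel₀ hB.ne', mul_one] at h
  have hscal := F_scal hf0 hfC1 hfscal hs
  rw [← hB2] at hscal
  have hfs : 0 < f s := hfpos s hs
  rw [hder1 t ht, hder2 t ht, ← hs_def, ← hB_def]
  have ht2 : 0 < t ^ 2 := by positivity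
  have hB2pos : (0:ℝ) < B ^ 2 := by positivity
  have hsq2 : 4 * s ^ 2 ≤ M ^ 2 * t ^ 2 * B ^ 2 := by
    nlinarith [mul_le_mul hcomp2 hcomp2 hs.le (by positivity : (0:ℝ) ≤ M / 2 * t * B)]
  have hsq1 : m ^ 2 * t ^ 2 * B ^ 2 ≤ 4 * s ^ 2 := by
    nlinarith [mul_le_mul hcomp1 hcomp1 (by positivity : (0:ℝ) ≤ m / 2 * t * B) hs.le]
  have hMsq : (0:ℝ) < M ^ 2 := by positivity
  have hmsq : (0:ℝ) < m ^ 2 := by positivity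
  have hssq : (0:ℝ) < s ^ 2 := by positivity
  have key1 : 8 * s * B ^ 2 ≤ M ^ 2 * t ^ 2 * f s * B ^ 2 := by
    nlinarith [mul_le_mul_of_nonneg_right hsq2 hfs.le,
      mul_le_mul_of_nonneg_left hscal.1 (by positivity : (0:ℝ) ≤ 4 * s),
      mul_pos hm (mul_pos hs hB2pos)]
  have key1' : 8 * s ≤ M ^ 2 * t ^ 2 * f s :=
    le_of_mul_le_mul_right key1 hB2pos
  have key2 : m ^ 2 * t ^ 2 * f s * B ^ 2 ≤ 4 * (2 + M) * s * B ^ 2 := by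
    nlinarith [mul_le_mul_of_nonneg_right hsq1 hfs.le,
      mul_le_mul_of_nonneg_left hscal.2 (by positivity : (0:ℝ) ≤ 4 * s)]
  have key2' : m ^ 2 * t ^ 2 * f s ≤ 4 * (2 + M) * s :=
    le_of_mul_le_mul_right key2 hB2pos
  constructor
  · constructor
    · rw [div_le_div_iff₀ hMsq hs]
      nlinarith
    · rw [div_le_div_iff₀ hs hmsq]
      nlinarith
  · constructor
    · rw [div_le_div_iff₀ hMsq hssq]
      nlinarith
    · rw [div_le_div_iff₀ hssq hmsq]
      nlinarith
end
end

section
/- There exists a constant C' > 0, depending only on C, Λ and d, such that for all x, z ∈ D with B(x, δ(x)/2) ⊆ D and |z − x| ≤ δ(x)/2, the function U = ψ∘V∘δ satisfies |∇U(z) − ∇U(x)| ≤ C'·(ψ(V(δ(x)))/δ(x)²)·|z − x|. -/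
open MeasureTheory Set Filter Topology

noncomputable section

lemma deriv_nonpos_of_strictAntiOn {ψ : ℝ → ℝ} (hanti : StrictAntiOn ψ (Set.Ioi 0))
    {s : ℝ} (hs : 0 < s) (hdiff : DifferentiableAt ℝ ψ s) : deriv ψ s ≤ 0 := by
  have h := hasDerivAt_iff_tendsto_slope.1 hdiff.hasDerivAt
  have h2 : Tendsto (slope ψ s) (𝓝[>] s) (𝓝 (deriv ψ s)) :=
    h.mono_left (nhdsWithin_mono s fun t ht => ne_of_gt ht)
  refine le_of_tendsto h2 ?_
  filter_upwards [self_mem_nhdsWithin] with t ht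
  have hts : s < t := ht
  have : ψ t < ψ s := hanti (mem_Ioi.2 hs) (mem_Ioi.2 (hs.trans hts)) hts
  rw [slope_def_field]
  exact div_nonpos_of_nonpos_of_nonneg (by linarith) (by linarith)

lemma pow_mul_monotoneOn {f f' : ℝ → ℝ} {n : ℕ} (hn : 1 ≤ n)
    (hf : ∀ t ∈ Set.Ioi (0:ℝ), HasDerivAt f (f' t) t)
    (hineq : ∀ t ∈ Set.Ioc (0:ℝ) 1, 0 ≤ t * f' t + n * f t) :
    MonotoneOn (fun t => f t * t ^ n) (Set.Ioc (0:ℝ) 1) := by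
  obtain ⟨m, rfl⟩ := Nat.exists_eq_add_of_le hn
  set n := 1 + m with hnm
  have hder : ∀ t ∈ Set.Ioi (0:ℝ), HasDerivAt (fun t => f t * t ^ n)
      (f' t * t ^ n + f t * (n * t ^ (n-1))) t := fun t ht =>
    (hf t ht).mul (hasDerivAt_pow n t)
  apply monotoneOn_of_deriv_nonneg (convex_Ioc 0 1)
  · intro t ht
    exact ((hder t ht.1).continuousAt).continuousWithinAt
  · rw [interior_Ioc]
    intro t ht
    exact ((hder t ht.1).differentiableAt).differentiableWithinAt
  · rw [interior_Ioc]
    intro t ht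
    rw [(hder t ht.1).deriv]
    have h1 := hineq t ⟨ht.1, le_of_lt ht.2⟩
    have h2 : (0:ℝ) < t ^ m := pow_pos ht.1 m
    have hsub : n - 1 = m := by omega
    have hpow : t ^ n = t ^ m * t := by rw [hnm, add_comm, pow_succ]
    rw [hsub, hpow]
    have key : 0 ≤ t ^ m * (t * f' t + (n:ℝ) * f t) := mul_nonneg h2.le h1
    nlinarith [key]

set_option maxHeartbeats 1000000 in
/-- Gradient estimate for `U = ψ∘V∘δ`: near each point `x` whose ball `B(x,δ(x)/2)`
stays in `D`, the gradient of `U` is Lipschitz with constant comparable to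
`ψ(V(δ(x)))/δ(x)²`. -/
theorem gradient_estimate_psi_V_delta
    (d : ℕ) (hd : 2 ≤ d) (C Λ : ℝ) (hC : 1 ≤ C) (hΛ : 0 ≤ Λ)
    (D : Set (EuclideanSpace ℝ (Fin d))) (hD : IsOpen D)
    (δ : EuclideanSpace ℝ (Fin d) → ℝ)
    (hδrange : ∀ x ∈ D, 0 < δ x ∧ δ x ≤ 1)
    (hδdiff : ∀ x ∈ D, DifferentiableAt ℝ δ x)
    (hδgrad : ∀ x ∈ D, ‖gradient δ x‖ ≤ 1)
    (hδlip : ∀ x ∈ D, ∀ z ∈ D, ‖gradient δ z - gradient δ x‖ ≤ Λ * ‖z - x‖)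
    (V : ℝ → ℝ) (hVC2 : ContDiffOn ℝ 2 V (Set.Ioi 0))
    (hVpos : ∀ t > 0, 0 < V t) (hVmono : StrictMonoOn V (Set.Ioi 0))
    (hV' : ∀ t ∈ Set.Ioc (0:ℝ) 2, deriv V t ≤ C * (V t / t))
    (hV'' : ∀ t ∈ Set.Ioc (0:ℝ) 2, |deriv (deriv V) t| ≤ C * (deriv V t / t))
    (ψ : ℝ → ℝ) (hψC2 : ContDiffOn ℝ 2 ψ (Set.Ioi 0))
    (hψpos : ∀ s > 0, 0 < ψ s) (hψanti : StrictAntiOn ψ (Set.Ioi 0))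
    (hψ' : ∀ s > 0, -(deriv ψ s) ≤ C * (ψ s / s))
    (hψ'' : ∀ s > 0, |deriv (deriv ψ) s| ≤ C * (ψ s / s ^ 2)) :
    ∃ C' > (0:ℝ), ∀ x ∈ D, ∀ z ∈ D,
      Metric.ball x (δ x / 2) ⊆ D → ‖z - x‖ ≤ δ x / 2 →
      ‖gradient (fun y => ψ (V (δ y))) z - gradient (fun y => ψ (V (δ y))) x‖
        ≤ C' * (ψ (V (δ x)) / (δ x) ^ 2) * ‖z - x‖ := by
  have hC0 : (0:ℝ) < C := lt_of_lt_of_le one_pos hC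
  set n : ℕ := ⌈C^2⌉₊ with hndef
  have hnC : C^2 ≤ (n:ℝ) := Nat.le_ceil _
  have hn1 : 1 ≤ n := by
    rw [hndef]
    exact Nat.one_le_iff_ne_zero.2 (by
      simp only [ne_eq, Nat.ceil_eq_zero, not_le]
      exact pow_pos hC0 2)
  have h2n1 : (1:ℝ) ≤ 2^n := one_le_pow₀ (by norm_num)
  have h2npos : (0:ℝ) < 2^n := by positivity
  -- differentiability facts
  have hVd : ∀ t : ℝ, 0 < t → DifferentiableAt ℝ V t := fun t ht =>
    (hVC2.differentiableOn (by norm_num)).differentiableAt (isOpen_Ioi.mem_nhds ht)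
  have hVcd1 : ContDiffOn ℝ 1 (deriv V) (Set.Ioi 0) :=
    hVC2.deriv_of_isOpen isOpen_Ioi (by norm_num)
  have hVd' : ∀ t : ℝ, 0 < t → DifferentiableAt ℝ (deriv V) t := fun t ht =>
    (hVcd1.differentiableOn one_ne_zero).differentiableAt (isOpen_Ioi.mem_nhds ht)
  have hψd : ∀ s : ℝ, 0 < s → DifferentiableAt ℝ ψ s := fun s hs =>
    (hψC2.differentiableOn (by norm_num)).differentiableAt (isOpen_Ioi.mem_nhds hs)
  have hψcd1 : ContDiffOn ℝ 1 (deriv ψ) (Set.Ioi 0) :=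
    hψC2.deriv_of_isOpen isOpen_Ioi (by norm_num)
  have hψd' : ∀ s : ℝ, 0 < s → DifferentiableAt ℝ (deriv ψ) s := fun s hs =>
    (hψcd1.differentiableOn one_ne_zero).differentiableAt (isOpen_Ioi.mem_nhds hs)
  -- sign facts
  have hV'nonneg : ∀ t ∈ Set.Ioc (0:ℝ) 2, 0 ≤ deriv V t := by
    intro t ht
    by_contra hneg
    push_neg at hneg
    have h1 := (abs_nonneg (deriv (deriv V) t)).trans (hV'' t ht)
    have h2 : deriv V t / t < 0 := div_neg_of_neg_of_pos hneg ht.1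
    nlinarith
  have hψ'nonpos : ∀ s : ℝ, 0 < s → deriv ψ s ≤ 0 := fun s hs =>
    deriv_nonpos_of_strictAntiOn hψanti hs (hψd s hs)
  have hψ'abs : ∀ s : ℝ, 0 < s → |deriv ψ s| ≤ C * (ψ s / s) := by
    intro s hs
    rw [abs_of_nonpos (hψ'nonpos s hs)]
    exact hψ' s hs
  -- the derivative of ψ ∘ V and its derivative
  set h : ℝ → ℝ := fun t => deriv ψ (V t) * deriv V t with hh
  set h' : ℝ → ℝ := fun t =>
    deriv (deriv ψ) (V t) * deriv V t * deriv V t + deriv ψ (V t) * deriv (deriv V) t with hh'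
  have hcomp : ∀ t : ℝ, 0 < t → HasDerivAt (fun u => ψ (V u)) (h t) t := by
    intro t ht
    exact ((hψd _ (hVpos t ht)).hasDerivAt).comp t (hVd t ht).hasDerivAt
  have hcomp' : ∀ t : ℝ, 0 < t → HasDerivAt h (h' t) t := by
    intro t ht
    have hVt := hVpos t ht
    have h1 : HasDerivAt (fun u => deriv ψ (V u)) (deriv (deriv ψ) (V t) * deriv V t) t :=
      ((hψd' _ hVt).hasDerivAt).comp t (hVd t ht).hasDerivAt
    exact h1.mul (hVd' t ht).hasDerivAt
  -- scalar estimates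
  have EST1 : ∀ t ∈ Set.Ioc (0:ℝ) 1, |h t| ≤ C^2 * (ψ (V t) / t) := by
    intro t ht
    have ht0 := ht.1
    have ht2 : t ∈ Set.Ioc (0:ℝ) 2 := ⟨ht0, le_trans ht.2 one_le_two⟩
    have hVt := hVpos t ht0
    have hψVt := hψpos _ hVt
    have hd1 : |deriv ψ (V t)| ≤ C * (ψ (V t) / V t) := hψ'abs _ hVt
    have hd2 : |deriv V t| ≤ C * (V t / t) := by
      rw [abs_of_nonneg (hV'nonneg t ht2)]
      exact hV' t ht2
    calc |h t| = |deriv ψ (V t)| * |deriv V t| := abs_mul _ _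
      _ ≤ (C * (ψ (V t) / V t)) * (C * (V t / t)) :=
          mul_le_mul hd1 hd2 (abs_nonneg _)
            (mul_nonneg hC0.le (div_nonneg hψVt.le hVt.le))
      _ = C^2 * (ψ (V t) / t) := by
          field_simp
  have EST2 : ∀ t ∈ Set.Ioc (0:ℝ) 1, |h' t| ≤ 2 * C^3 * (ψ (V t) / t^2) := by
    intro t ht
    have ht0 := ht.1
    have ht2 : t ∈ Set.Ioc (0:ℝ) 2 := ⟨ht0, le_trans ht.2 one_le_two⟩
    have hVt := hVpos t ht0
    have hψVt := hψpos _ hVt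
    have hb1 : |deriv (deriv ψ) (V t)| ≤ C * (ψ (V t) / (V t)^2) := hψ'' _ hVt
    have hd1 : |deriv ψ (V t)| ≤ C * (ψ (V t) / V t) := hψ'abs _ hVt
    have hd2 : |deriv V t| ≤ C * (V t / t) := by
      rw [abs_of_nonneg (hV'nonneg t ht2)]
      exact hV' t ht2
    have hb2 : |deriv (deriv V) t| ≤ C * ((C * (V t / t)) / t) := by
      refine (hV'' t ht2).trans (mul_le_mul_of_nonneg_left ?_ hC0.le)
      exact div_le_div_of_nonneg_right (hV' t ht2) ht0.le
    have nn1 : (0:ℝ) ≤ C * (V t / t) := mul_nonneg hC0.le (div_nonneg hVt.le ht0.le)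
    have nn2 : (0:ℝ) ≤ C * (ψ (V t) / (V t)^2) :=
      mul_nonneg hC0.le (div_nonneg hψVt.le (by positivity))
    have nn3 : (0:ℝ) ≤ C * (ψ (V t) / V t) := mul_nonneg hC0.le (div_nonneg hψVt.le hVt.le)
    calc |h' t| ≤ |deriv (deriv ψ) (V t) * deriv V t * deriv V t|
          + |deriv ψ (V t) * deriv (deriv V) t| := abs_add_le _ _
      _ = |deriv (deriv ψ) (V t)| * |deriv V t| * |deriv V t|
          + |deriv ψ (V t)| * |deriv (deriv V) t| := by rw [abs_mul, abs_mul, abs_mul]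
      _ ≤ (C * (ψ (V t) / (V t)^2)) * (C * (V t / t)) * (C * (V t / t))
          + (C * (ψ (V t) / V t)) * (C * ((C * (V t / t)) / t)) :=
          add_le_add (mul_le_mul (mul_le_mul hb1 hd2 (abs_nonneg _) nn2) hd2
            (abs_nonneg _) (mul_nonneg nn2 nn1)) (mul_le_mul hd1 hb2 (abs_nonneg _) nn3)
      _ = 2 * C^3 * (ψ (V t) / t^2) := by
          field_simp
          ring
  -- monotonicity of ψ(V t) t^n
  have hmono : MonotoneOn (fun t => ψ (V t) * t ^ n) (Set.Ioc (0:ℝ) 1) := by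
    apply pow_mul_monotoneOn hn1 (fun t ht => hcomp t ht)
    intro t ht
    show 0 ≤ t * h t + (n:ℝ) * ψ (V t)
    have hψVt := hψpos _ (hVpos t ht.1)
    have e1 := EST1 t ht
    have hneg : -(t * h t) ≤ C^2 * ψ (V t) := by
      have h3 : -(h t) ≤ C^2 * (ψ (V t)/t) := (neg_le_abs (h t)).trans e1
      calc -(t * h t) = t * (-(h t)) := by ring
        _ ≤ t * (C^2 * (ψ (V t)/t)) := mul_le_mul_of_nonneg_left h3 ht.1.le
        _ = C^2 * ψ (V t) := by
          field_simp
          exact div_self (ne_of_gt ht.1)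
    nlinarith [mul_nonneg (sub_nonneg.2 hnC) hψVt.le]
  -- doubling estimate
  have hdbl : ∀ A : ℝ, 0 < A → A ≤ 1 → ∀ t : ℝ, A/2 ≤ t → t ≤ 1 →
      ψ (V t) ≤ 2^n * ψ (V A) := by
    intro A hA hA1 t htA ht1
    have ht0 : 0 < t := lt_of_lt_of_le (by linarith) htA
    have hψVA := hψpos _ (hVpos A hA)
    rcases le_or_gt A t with hcase | hcase
    · have hVle : V A ≤ V t := hVmono.monotoneOn (mem_Ioi.2 hA) (mem_Ioi.2 ht0) hcase
      have : ψ (V t) ≤ ψ (V A) :=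
        hψanti.antitoneOn (mem_Ioi.2 (hVpos A hA)) (mem_Ioi.2 (hVpos t ht0)) hVle
      nlinarith
    · have hmle := hmono (show t ∈ Set.Ioc (0:ℝ) 1 from ⟨ht0, ht1⟩)
        (show A ∈ Set.Ioc (0:ℝ) 1 from ⟨hA, hA1⟩) hcase.le
      have hpow : A ^ n ≤ 2^n * t^n := by
        have h2t : A ≤ 2 * t := by linarith
        calc A ^ n ≤ (2*t)^n := pow_le_pow_left₀ hA.le h2t n
          _ = 2^n * t^n := mul_pow 2 t n
      have htn : (0:ℝ) < t^n := pow_pos ht0 n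
      have hfin : ψ (V t) * t^n ≤ (2^n * ψ (V A)) * t^n := by
        calc ψ (V t) * t^n ≤ ψ (V A) * A^n := hmle
          _ ≤ ψ (V A) * (2^n * t^n) := mul_le_mul_of_nonneg_left hpow hψVA.le
          _ = (2^n * ψ (V A)) * t^n := by ring
      exact le_of_mul_le_mul_right hfin htn
  -- norm of fderiv equals norm of gradient
  have norm_fderiv_eq : ∀ (g : EuclideanSpace ℝ (Fin d) → ℝ) y,
      ‖fderiv ℝ g y‖ = ‖gradient g y‖ := by
    intro g y
    rw [gradient]
    exact (LinearIsometryEquiv.norm_map _ _).symm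
  -- gradient formula
  have gradU : ∀ y ∈ D, gradient (fun y => ψ (V (δ y))) y = h (δ y) • gradient δ y := by
    intro y hy
    have hδy := (hδrange y hy).1
    have h1 := (hcomp (δ y) hδy).comp_hasFDerivAt y (hδdiff y hy).hasFDerivAt
    calc gradient (fun y => ψ (V (δ y))) y
        = (InnerProductSpace.toDual ℝ _).symm (h (δ y) • fderiv ℝ δ y) :=
          h1.hasGradientAt.gradient
      _ = h (δ y) • gradient δ y := by rw [_root_.map_smul]; rfl
  -- conclusion
  refine ⟨2^n * (4*C^2*Λ + 8*C^3), ?_, ?_⟩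
  · have hpos : (0:ℝ) < 4*C^2*Λ + 8*C^3 := by
      nlinarith [pow_pos hC0 3, mul_nonneg (sq_nonneg C) hΛ]
    exact mul_pos h2npos hpos
  intro x hx z hz hball hdist
  obtain ⟨ha0, ha1⟩ := hδrange x hx
  obtain ⟨hb0, hb1⟩ := hδrange z hz
  have hψVa := hψpos _ (hVpos _ ha0)
  have hQ : (0:ℝ) ≤ ψ (V (δ x)) / (δ x)^2 := div_nonneg hψVa.le (sq_nonneg _)
  -- the segment from x to z lies in D
  have hseg : segment ℝ x z ⊆ D := by
    intro y hy
    rw [segment_eq_image'] at hy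
    obtain ⟨t, ht, rfl⟩ := hy
    show x + t • (z - x) ∈ D
    rcases eq_or_lt_of_le ht.2 with h1 | h1
    · have heq : x + t • (z - x) = z := by rw [h1]; simp
      rw [heq]; exact hz
    · apply hball
      rw [Metric.mem_ball, dist_eq_norm]
      have heq : x + t • (z - x) - x = t • (z - x) := by abel
      rw [heq, norm_smul, Real.norm_eq_abs, abs_of_nonneg ht.1]
      calc t * ‖z - x‖ ≤ t * (δ x / 2) := mul_le_mul_of_nonneg_left hdist ht.1
        _ < δ x / 2 := by nlinarith
  -- δ is 1-Lipschitz along the segment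
  have hδlip1 : |δ z - δ x| ≤ ‖z - x‖ := by
    have hmvt := (convex_segment x z).norm_image_sub_le_of_norm_hasFDerivWithin_le
      (f' := fun y => fderiv ℝ δ y)
      (fun y hy => ((hδdiff y (hseg hy)).hasFDerivAt).hasFDerivWithinAt)
      (fun y hy => by rw [norm_fderiv_eq]; exact hδgrad y (hseg hy))
      (left_mem_segment ℝ x z) (right_mem_segment ℝ x z)
    simpa using hmvt
  have hbnd := abs_le.1 (hδlip1.trans hdist)
  have hblow : δ x / 2 ≤ δ z := by linarith [hbnd.1]
  -- the interval between δ x and δ z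
  have hI : Set.uIcc (δ x) (δ z) ⊆ Set.Ioc (0:ℝ) 1 := by
    intro t ht
    rcases Set.mem_uIcc.1 ht with ⟨h1, h2⟩ | ⟨h1, h2⟩ <;>
      exact ⟨by linarith, by linarith⟩
  have hIlow : ∀ t ∈ Set.uIcc (δ x) (δ z), δ x / 2 ≤ t := by
    intro t ht
    rcases Set.mem_uIcc.1 ht with ⟨h1, h2⟩ | ⟨h1, h2⟩ <;> linarith
  -- bound for h' on the interval
  have hM : ∀ t ∈ Set.uIcc (δ x) (δ z),
      ‖h' t‖ ≤ 8 * 2^n * C^3 * (ψ (V (δ x)) / (δ x)^2) := by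
    intro t ht
    have htI := hI ht
    have hta := hIlow t ht
    have e2 := EST2 t htI
    have hdblt := hdbl (δ x) ha0 ha1 t hta htI.2
    have hhalfsq : (0:ℝ) < (δ x / 2)^2 := pow_pos (by linarith) 2
    rw [Real.norm_eq_abs]
    calc |h' t| ≤ 2 * C^3 * (ψ (V t) / t^2) := e2
      _ ≤ 2 * C^3 * ((2^n * ψ (V (δ x))) / ((δ x / 2)^2)) := by
          refine mul_le_mul_of_nonneg_left
            (div_le_div₀ (mul_nonneg h2npos.le hψVa.le) hdblt hhalfsq ?_) ?_
          · nlinarith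
          · exact mul_nonneg (by norm_num) (pow_nonneg hC0.le 3)
      _ = 8 * 2^n * C^3 * (ψ (V (δ x)) / (δ x)^2) := by
          field_simp
          ring
  -- bound |h (δ z) - h (δ x)|
  have hstep2 : |h (δ z) - h (δ x)| ≤
      (8 * 2^n * C^3 * (ψ (V (δ x)) / (δ x)^2)) * ‖z - x‖ := by
    have hmvt := (convex_uIcc (δ x) (δ z)).norm_image_sub_le_of_norm_hasDerivWithin_le
      (f' := h') (fun t ht => (hcomp' t (hI ht).1).hasDerivWithinAt) hM
      Set.left_mem_uIcc Set.right_mem_uIcc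
    rw [Real.norm_eq_abs, Real.norm_eq_abs] at hmvt
    refine hmvt.trans (mul_le_mul_of_nonneg_left hδlip1
      (mul_nonneg (mul_nonneg (mul_nonneg (by norm_num) h2npos.le)
        (pow_nonneg hC0.le 3)) hQ))
  -- bound |h (δ z)|
  have hstep1 : |h (δ z)| ≤ 4 * 2^n * C^2 * (ψ (V (δ x)) / (δ x)^2) := by
    have e1 := EST1 (δ z) ⟨hb0, hb1⟩
    have hdblb := hdbl (δ x) ha0 ha1 (δ z) hblow hb1
    have hhalf : (0:ℝ) < δ x / 2 := by linarith
    have hdd : ψ (V (δ x)) / δ x ≤ ψ (V (δ x)) / (δ x)^2 :=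
      div_le_div_of_nonneg_left hψVa.le (pow_pos ha0 2) (by nlinarith)
    calc |h (δ z)| ≤ C^2 * (ψ (V (δ z)) / δ z) := e1
      _ ≤ C^2 * ((2^n * ψ (V (δ x))) / (δ x / 2)) :=
          mul_le_mul_of_nonneg_left
            (div_le_div₀ (mul_nonneg h2npos.le hψVa.le) hdblb hhalf hblow) (sq_nonneg C)
      _ = 2 * 2^n * C^2 * (ψ (V (δ x)) / δ x) := by
          field_simp
      _ ≤ 2 * 2^n * C^2 * (ψ (V (δ x)) / (δ x)^2) := by
          refine mul_le_mul_of_nonneg_left hdd ?_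
          exact mul_nonneg (mul_nonneg (by norm_num) h2npos.le) (sq_nonneg C)
      _ ≤ 4 * 2^n * C^2 * (ψ (V (δ x)) / (δ x)^2) := by
          nlinarith [mul_nonneg (mul_nonneg h2npos.le (sq_nonneg C)) hQ]
  -- assemble
  rw [gradU z hz, gradU x hx]
  have decomp : h (δ z) • gradient δ z - h (δ x) • gradient δ x
      = h (δ z) • (gradient δ z - gradient δ x) + (h (δ z) - h (δ x)) • gradient δ x := by
    rw [smul_sub, sub_smul]; abel
  rw [decomp]
  have hnn1 : (0:ℝ) ≤ 4 * 2^n * C^2 * (ψ (V (δ x)) / (δ x)^2) :=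
    mul_nonneg (mul_nonneg (mul_nonneg (by norm_num) h2npos.le) (sq_nonneg C)) hQ
  have hnn2 : (0:ℝ) ≤ (8 * 2^n * C^3 * (ψ (V (δ x)) / (δ x)^2)) * ‖z - x‖ :=
    mul_nonneg (mul_nonneg (mul_nonneg (mul_nonneg (by norm_num) h2npos.le)
      (pow_nonneg hC0.le 3)) hQ) (norm_nonneg _)
  calc ‖h (δ z) • (gradient δ z - gradient δ x) + (h (δ z) - h (δ x)) • gradient δ x‖
      ≤ ‖h (δ z) • (gradient δ z - gradient δ x)‖
        + ‖(h (δ z) - h (δ x)) • gradient δ x‖ := norm_add_le _ _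
    _ = |h (δ z)| * ‖gradient δ z - gradient δ x‖
        + |h (δ z) - h (δ x)| * ‖gradient δ x‖ := by
        rw [norm_smul, norm_smul, Real.norm_eq_abs, Real.norm_eq_abs]
    _ ≤ (4 * 2^n * C^2 * (ψ (V (δ x)) / (δ x)^2)) * (Λ * ‖z - x‖)
        + ((8 * 2^n * C^3 * (ψ (V (δ x)) / (δ x)^2)) * ‖z - x‖) * 1 :=
        add_le_add (mul_le_mul hstep1 (hδlip x hx z hz) (norm_nonneg _) hnn1)
          (mul_le_mul hstep2 (hδgrad x hx) (norm_nonneg _) hnn2)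
    _ = 2^n * (4*C^2*Λ + 8*C^3) * (ψ (V (δ x)) / (δ x)^2) * ‖z - x‖ := by ring
end
end
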